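/- arXiv:1312.0386 — 11 statements merged into one kernel-verified Lean document; each statement's English description precedes it below -/
import Mathlib

section
/- Let β > 1 be an algebraic integer of degree d+1 (d ≥ 1) with minimal polynomial X^{d+1} + b_d X^d + ⋯ + b_1 X + b_0 over ℤ, and define r = (r_0,…,r_{d-1}) ∈ ℝ^d by the factorization X^{d+1} + b_d X^d + ⋯ + b_0 = (X − β)(X^d + r_{d-1}X^{d-1} + ⋯ + r_0). Then for every z ∈ ℤ^d one has {r·τ_r(z)} = T_β({r·z}), and the map Φ_r : ℤ^d → ℤ[β] ∩ [0,1), z ↦ {r·z}, is a bijection; in particular the restriction of the beta-transformation T_β to ℤ[β] ∩ [0,1) is conjugate to τ_r. -/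
/-!
Let `ρ = (r_0, …, r_{d-1}, 1)` be the coefficient vector of the cofactor `Q` in
`P = (X - β) Q`. Comparing coefficients gives `β ρ_0 = -b_0` and `β ρ_{k+1} = ρ_k - b_{k+1}`, hence
`β (r·z + n) = r·(z_1, …, z_{d-1}, n) - b·(z, n)`. With `n = -⌊r·z⌋` this is the conjugacy
`{r·τ_r(z)} = {β {r·z}}`. The same identity shows that the `ℤ`-span of `ρ`, which contains `1` and
lies in `ℤ[β]`, is stable under multiplication by `β`, so it is all of `ℤ[β]`. Since `ℤ[β]` is free
of rank `d + 1` (the degree of the minimal polynomial), the `d + 1` spanning vectors `ρ` are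
linearly independent, so `(z, n) ↦ r·z + n` is a bijection `ℤ^d × ℤ → ℤ[β]`; taking fractional
parts gives the bijection `ℤ^d → ℤ[β] ∩ [0, 1)`.
-/

open Polynomial

/-- The shift radix system `τ_r : ℤ^d → ℤ^d`. -/
noncomputable def srsMap (d : ℕ) (r : Fin d → ℝ) (z : Fin d → ℤ) : Fin d → ℤ :=
  fun i =>
    if h : (i : ℕ) + 1 < d then z ⟨(i : ℕ) + 1, h⟩
    else -⌊∑ j, r j * (z j : ℝ)⌋

/-- The beta-transformation `T_β(γ) = βγ - ⌊βγ⌋`. -/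
noncomputable def betaT (β : ℝ) (x : ℝ) : ℝ := Int.fract (β * x)

theorem coeff_X_pow_add_sum_fin {R : Type*} [Semiring R] {n : ℕ} (c : Fin n → R)
    (k : Fin (n + 1)) :
    (X ^ n + ∑ i : Fin n, C (c i) * X ^ (i : ℕ)).coeff k = (Fin.snoc c 1 : Fin (n + 1) → R) k := by
  induction k using Fin.lastCases with
  | last => simp [coeff_eq_zero_of_degree_lt (degree_sum_fin_lt c)]
  | cast i => simp [Fin.val_inj, i.isLt.ne]

theorem natDegree_X_pow_add_sum_fin {R : Type*} [Semiring R] [Nontrivial R] {n : ℕ}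
    (c : Fin n → R) : (X ^ n + ∑ i : Fin n, C (c i) * X ^ (i : ℕ)).natDegree = n := by
  rw [natDegree_add_eq_left_of_degree_lt, natDegree_X_pow]
  exact (degree_sum_fin_lt c).trans_eq (degree_X_pow n).symm

section
variable {R : Type*} [CommRing R] {d : ℕ} {a : R} {b : Fin (d + 1) → R} {r : Fin d → R}

theorem mul_snoc_zero_of_eq_X_sub_C_mul
    (hfac : X ^ (d + 1) + ∑ i : Fin (d + 1), C (b i) * X ^ (i : ℕ)
      = (X - C a) * (X ^ d + ∑ i : Fin d, C (r i) * X ^ (i : ℕ))) :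
    a * (Fin.snoc r 1 : Fin (d + 1) → R) 0 = -b 0 := by
  have h := congrArg (coeff · 0) hfac
  have hP := coeff_X_pow_add_sum_fin b (Fin.castSucc 0)
  have hQ := coeff_X_pow_add_sum_fin r 0
  simp only [Fin.snoc_castSucc, Fin.val_castSucc, Fin.val_zero] at hP hQ
  simp only [mul_coeff_zero, coeff_sub, coeff_X_zero, coeff_C_zero, hP, hQ] at h
  linear_combination h

theorem mul_snoc_succ_of_eq_X_sub_C_mul
    (hfac : X ^ (d + 1) + ∑ i : Fin (d + 1), C (b i) * X ^ (i : ℕ)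
      = (X - C a) * (X ^ d + ∑ i : Fin d, C (r i) * X ^ (i : ℕ))) (k : Fin d) :
    a * (Fin.snoc r 1 : Fin (d + 1) → R) k.succ
      = (Fin.snoc r 1 : Fin (d + 1) → R) k.castSucc - b k.succ := by
  have h := congrArg (coeff · (k + 1)) hfac
  have hP := coeff_X_pow_add_sum_fin b k.succ.castSucc
  have hQ := coeff_X_pow_add_sum_fin r k.succ
  have hQ' := coeff_X_pow_add_sum_fin r k.castSucc
  simp only [Fin.val_castSucc, Fin.val_succ, Fin.snoc_castSucc] at hP hQ hQ' ⊢
  simp only [coeff_X_sub_C_mul, hP, hQ, hQ'] at h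
  linear_combination h

theorem mul_sum_snoc_mul_of_eq_X_sub_C_mul
    (hfac : X ^ (d + 1) + ∑ i : Fin (d + 1), C (b i) * X ^ (i : ℕ)
      = (X - C a) * (X ^ d + ∑ i : Fin d, C (r i) * X ^ (i : ℕ))) (w : Fin (d + 1) → R) :
    a * ∑ j, (Fin.snoc r 1 : Fin (d + 1) → R) j * w j
      = ∑ k : Fin d, r k * w k.succ - ∑ j, b j * w j := by
  have hsucc (k : Fin d) : a * ((Fin.snoc r 1 : Fin (d + 1) → R) k.succ * w k.succ)
      = r k * w k.succ - b k.succ * w k.succ := by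
    rw [← mul_assoc, mul_snoc_succ_of_eq_X_sub_C_mul hfac, Fin.snoc_castSucc, sub_mul]
  rw [Finset.mul_sum, Fin.sum_univ_succ, Fin.sum_univ_succ (fun j => b j * w j), ← mul_assoc,
    mul_snoc_zero_of_eq_X_sub_C_mul hfac, Finset.sum_congr rfl fun k _ => hsucc k,
    Finset.sum_sub_distrib]
  ring
end

theorem srsMap_eq_tail_snoc {d : ℕ} (r : Fin d → ℝ) (z : Fin d → ℤ) :
    srsMap d r z = Fin.tail (Fin.snoc z (-⌊∑ j, r j * (z j : ℝ)⌋) : Fin (d + 1) → ℤ) := by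
  funext i
  simp only [srsMap, Fin.tail, Fin.snoc, Fin.val_succ, Fin.castLT]
  rfl

theorem sum_snoc_zsmul_snoc {A : Type*} [CommRing A] {d : ℕ} (r : Fin d → A) (z : Fin d → ℤ)
    (t : ℤ) :
    ∑ j, (Fin.snoc z t : Fin (d + 1) → ℤ) j • (Fin.snoc r 1 : Fin (d + 1) → A) j
      = ∑ j, r j * (z j : A) + t := by
  simp [Fin.sum_univ_castSucc, mul_comm]

theorem fract_sum_mul_srsMap {d : ℕ} {β : ℝ} {b : Fin (d + 1) → ℤ} {r : Fin d → ℝ}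
    (hfac : X ^ (d + 1) + ∑ i : Fin (d + 1), C ((b i : ℝ)) * X ^ (i : ℕ)
      = (X - C β) * (X ^ d + ∑ i : Fin d, C (r i) * X ^ (i : ℕ))) (z : Fin d → ℤ) :
    Int.fract (∑ j, r j * (srsMap d r z j : ℝ)) = betaT β (Int.fract (∑ j, r j * (z j : ℝ))) := by
  rw [srsMap_eq_tail_snoc]
  set s := ∑ j, r j * (z j : ℝ)
  set w : Fin (d + 1) → ℤ := Fin.snoc z (-⌊s⌋)
  have hw : ∑ j, (Fin.snoc r 1 : Fin (d + 1) → ℝ) j * (w j : ℝ) = Int.fract s := by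
    simp only [mul_comm _ ((w _ : ℤ) : ℝ), ← zsmul_eq_mul, w, sum_snoc_zsmul_snoc]
    push_cast
    rw [Int.fract, sub_eq_add_neg]
  have hmul := mul_sum_snoc_mul_of_eq_X_sub_C_mul hfac (fun j => (w j : ℝ))
  rw [hw] at hmul
  have hshift : ∑ j, r j * (Fin.tail w j : ℝ)
      = β * Int.fract s + ((∑ j, b j * w j : ℤ) : ℝ) := by
    push_cast [Fin.tail]
    linear_combination -hmul
  rw [hshift, Int.fract_add_intCast, betaT]

section
variable {A : Type*} [CommRing A] {d : ℕ} {a : A} {b : Fin (d + 1) → ℤ} {r : Fin d → A}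

open Submodule in
theorem span_snoc_eq_adjoin_of_eq_X_sub_C_mul
    (hfac : X ^ (d + 1) + ∑ i : Fin (d + 1), C ((b i : A)) * X ^ (i : ℕ)
      = (X - C a) * (X ^ d + ∑ i : Fin d, C (r i) * X ^ (i : ℕ))) :
    span ℤ (Set.range (Fin.snoc r 1 : Fin (d + 1) → A))
      = Subalgebra.toSubmodule (Algebra.adjoin ℤ {a}) := by
  set ρ : Fin (d + 1) → A := Fin.snoc r 1
  have hlast : ρ (Fin.last d) = 1 := Fin.snoc_last _ _
  have hsucc (k : Fin d) : ρ k.castSucc = a * ρ k.succ + b k.succ := by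
    rw [mul_snoc_succ_of_eq_X_sub_C_mul hfac]; ring
  apply le_antisymm
  · rw [span_le]
    rintro _ ⟨j, rfl⟩
    induction j using Fin.reverseInduction with
    | last => simp [hlast]
    | cast k ih =>
      rw [SetLike.mem_coe, Subalgebra.mem_toSubmodule, hsucc]
      exact add_mem (mul_mem (Algebra.self_mem_adjoin_singleton ℤ a) ih) (intCast_mem _ _)
  · have hone : (1 : A) ∈ span ℤ (Set.range ρ) := hlast ▸ subset_span (Set.mem_range_self _)
    have hmul : span ℤ (Set.range ρ) ≤ (span ℤ (Set.range ρ)).comap (LinearMap.mulLeft ℤ a) := by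
      rw [span_le]
      rintro _ ⟨j, rfl⟩
      induction j using Fin.cases with
      | zero =>
        simpa [ρ, mul_snoc_zero_of_eq_X_sub_C_mul hfac] using neg_mem (zsmul_mem hone (b 0))
      | succ k =>
        simpa [ρ, mul_snoc_succ_of_eq_X_sub_C_mul hfac] using
          sub_mem (subset_span (Set.mem_range_self k.castSucc)) (zsmul_mem hone (b k.succ))
    rw [Algebra.adjoin_eq_span, ← Submonoid.powers_eq_closure, span_le]
    rintro _ ⟨n, rfl⟩
    induction n with
    | zero => simpa using hone
    | succ n ih => simpa [pow_succ'] using hmul ih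

theorem mem_adjoin_iff_of_eq_X_sub_C_mul
    (hfac : X ^ (d + 1) + ∑ i : Fin (d + 1), C ((b i : A)) * X ^ (i : ℕ)
      = (X - C a) * (X ^ d + ∑ i : Fin d, C (r i) * X ^ (i : ℕ))) {x : A} :
    x ∈ Algebra.adjoin ℤ {a} ↔ ∃ (z : Fin d → ℤ) (n : ℤ), ∑ j, r j * (z j : A) + n = x := by
  rw [← Subalgebra.mem_toSubmodule, ← span_snoc_eq_adjoin_of_eq_X_sub_C_mul hfac,
    Submodule.mem_span_range_iff_exists_fun]
  constructor
  · rintro ⟨c, rfl⟩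
    exact ⟨Fin.init c, c (Fin.last d), by rw [← sum_snoc_zsmul_snoc, Fin.snoc_init_self]⟩
  · rintro ⟨z, n, rfl⟩
    exact ⟨Fin.snoc z n, sum_snoc_zsmul_snoc r z n⟩

theorem linearIndependent_snoc_of_eq_X_sub_C_mul [IsDomain A] [CharZero A]
    (hint : IsIntegral ℤ a)
    (hmin : minpoly ℤ a = X ^ (d + 1) + ∑ i : Fin (d + 1), C (b i) * X ^ (i : ℕ))
    (hfac : X ^ (d + 1) + ∑ i : Fin (d + 1), C ((b i : A)) * X ^ (i : ℕ)
      = (X - C a) * (X ^ d + ∑ i : Fin d, C (r i) * X ^ (i : ℕ))) :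
    LinearIndependent ℤ (Fin.snoc r 1 : Fin (d + 1) → A) := by
  rw [linearIndependent_iff_card_eq_finrank_span, Set.finrank,
    span_snoc_eq_adjoin_of_eq_X_sub_C_mul hfac, Subalgebra.finrank_toSubmodule,
    (Algebra.adjoin.powerBasis' hint).finrank, Algebra.adjoin.powerBasis'_dim, hmin,
    natDegree_X_pow_add_sum_fin, Fintype.card_fin]

theorem LinearIndependent.eq_of_sum_mul_add_intCast_eq
    (hind : LinearIndependent ℤ (Fin.snoc r 1 : Fin (d + 1) → A)) {z z' : Fin d → ℤ} {n n' : ℤ}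
    (h : ∑ j, r j * (z j : A) + n = ∑ j, r j * (z' j : A) + n') : z = z' := by
  rw [← sum_snoc_zsmul_snoc, ← sum_snoc_zsmul_snoc] at h
  funext j
  simpa using Fintype.linearIndependent_iffₛ.mp hind _ _ h j.castSucc
end

theorem srs_beta_conjugacy_general (d : ℕ) (β : ℝ)
    (hint : IsIntegral ℤ β) (b : Fin (d + 1) → ℤ)
    (hmin : minpoly ℤ β
      = X ^ (d + 1) + ∑ i : Fin (d + 1), C (b i) * X ^ (i : ℕ))
    (r : Fin d → ℝ)
    (hfac : (X ^ (d + 1) + ∑ i : Fin (d + 1), C ((b i : ℝ)) * X ^ (i : ℕ))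
      = (X - C β) * (X ^ d + ∑ i : Fin d, C (r i) * X ^ (i : ℕ))) :
    (∀ z : Fin d → ℤ,
        Int.fract (∑ j, r j * ((srsMap d r z) j : ℝ))
          = betaT β (Int.fract (∑ j, r j * (z j : ℝ))))
    ∧ Set.BijOn (fun z : Fin d → ℤ => Int.fract (∑ j, r j * (z j : ℝ)))
        Set.univ ({x : ℝ | x ∈ Subring.closure ({β} : Set ℝ)} ∩ Set.Ico 0 1) := by
  have hmem (x : ℝ) : x ∈ Subring.closure {β} ↔ ∃ (z : Fin d → ℤ) (n : ℤ),
      ∑ j, r j * (z j : ℝ) + n = x := by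
    rw [← mem_adjoin_iff_of_eq_X_sub_C_mul hfac, Algebra.adjoin_int]
    rfl
  have hind := linearIndependent_snoc_of_eq_X_sub_C_mul hint hmin hfac
  refine ⟨fract_sum_mul_srsMap hfac, fun z _ => ⟨?_, Int.fract_nonneg _, Int.fract_lt_one _⟩,
    fun z _ z' _ h => ?_, fun x ⟨hx, hx01⟩ => ?_⟩
  · exact (hmem _).mpr ⟨z, -⌊∑ j, r j * (z j : ℝ)⌋, by push_cast; rfl⟩
  · simp only [Int.fract, sub_eq_add_neg, ← Int.cast_neg] at h
    exact hind.eq_of_sum_mul_add_intCast_eq h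
  · obtain ⟨z, n, rfl⟩ := (hmem x).mp hx
    exact ⟨z, trivial, (Int.fract_add_intCast _ n).symm.trans (Int.fract_eq_self.mpr hx01)⟩

/-- for an algebraic integer `β > 1` with minimal polynomial
`X^{d+1} + b_d X^d + ⋯ + b_0` and `r` defined by
`X^{d+1} + b_d X^d + ⋯ + b_0 = (X-β)(X^d + r_{d-1}X^{d-1} + ⋯ + r_0)`, we have
`{r·τ_r(z)} = T_β({r·z})` for all `z ∈ ℤ^d`, and `Φ_r : z ↦ {r·z}` is a bijection
from `ℤ^d` onto `ℤ[β] ∩ [0,1)`; in particular `T_β` restricted to `ℤ[β] ∩ [0,1)`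
is conjugate to `τ_r`. -/
theorem srs_beta_conjugacy (d : ℕ) (hd : 1 ≤ d) (β : ℝ) (hβ : 1 < β)
    (hint : IsIntegral ℤ β) (b : Fin (d + 1) → ℤ)
    (hmin : minpoly ℤ β
      = X ^ (d + 1) + ∑ i : Fin (d + 1), C (b i) * X ^ (i : ℕ))
    (r : Fin d → ℝ)
    (hfac : (X ^ (d + 1) + ∑ i : Fin (d + 1), C ((b i : ℝ)) * X ^ (i : ℕ))
      = (X - C β) * (X ^ d + ∑ i : Fin d, C (r i) * X ^ (i : ℕ))) :
    (∀ z : Fin d → ℤ,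
        Int.fract (∑ j, r j * ((srsMap d r z) j : ℝ))
          = betaT β (Int.fract (∑ j, r j * (z j : ℝ))))
    ∧ Set.BijOn (fun z : Fin d → ℤ => Int.fract (∑ j, r j * (z j : ℝ)))
        Set.univ ({x : ℝ | x ∈ Subring.closure ({β} : Set ℝ)} ∩ Set.Ico 0 1) :=
  srs_beta_conjugacy_general d β hint b hmin r hfac
end

section
/- Let P(X) = p_d X^d + p_{d-1}X^{d-1} + ⋯ + p_1 X + p_0 ∈ ℤ[X] with p_0 ≥ 2 and p_d ≠ 0, set r = (p_d/p_0, p_{d-1}/p_0, …, p_1/p_0) ∈ ℝ^d, and let 𝓡 = ℤ[X]/P(X)ℤ[X] with x the image of X. Define the Brunotte basis elements w_0 = p_d and w_k = x·w_{k-1} + p_{d-k} for 1 ≤ k ≤ d−1 (so w_k = p_d x^k + p_{d-1}x^{k-1} + ⋯ + p_{d-k}). Then for every z = (z_0,…,z_{d-1}) ∈ ℤ^d the following identity holds in 𝓡: Σ_{k=0}^{d-1} z_k w_k = c + x · Σ_{k=0}^{d-1} (τ_r(z))_k w_k, where c = (z_0 p_d + z_1 p_{d-1} + ⋯ + z_{d-1}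 p_1) − p_0·⌊(z_0 p_d + ⋯ + z_{d-1} p_1)/p_0⌋ ∈ {0,1,…,p_0−1}. In particular, the backward division mapping restricted to the Brunotte module is conjugate to τ_r. -/
open Polynomial

/-- The polynomial `P(X) = p_d X^d + ⋯ + p_1 X + p_0`. -/
noncomputable def cnsPoly (d : ℕ) (p : Fin (d + 1) → ℤ) : Polynomial ℤ :=
  ∑ j : Fin (d + 1), C (p j) * X ^ (j : ℕ)

/-- The ring `𝓡 = ℤ[X]/P(X)ℤ[X]`. -/
abbrev CnsRing (d : ℕ) (p : Fin (d + 1) → ℤ) :=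
  Polynomial ℤ ⧸ Ideal.span {cnsPoly d p}

/-- The image `x` of `X` in `𝓡`. -/
noncomputable def cnsX (d : ℕ) (p : Fin (d + 1) → ℤ) : CnsRing d p :=
  Ideal.Quotient.mk _ X

/-- The Brunotte basis element `w_k = p_d x^k + p_{d-1} x^{k-1} + ⋯ + p_{d-k}`. -/
noncomputable def brunotteW (d : ℕ) (p : Fin (d + 1) → ℤ) (k : Fin d) : CnsRing d p :=
  ∑ i ∈ Finset.range ((k : ℕ) + 1),
    ((p ⟨d - i, by omega⟩ : ℤ) : CnsRing d p) * cnsX d p ^ ((k : ℕ) - i)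

lemma floor_int_div' (a b : ℤ) (hb : 0 < b) : ⌊(a:ℝ)/(b:ℝ)⌋ = a / b := by
  rw [Int.floor_eq_iff]
  have hb' : (0:ℝ) < (b:ℝ) := by exact_mod_cast hb
  constructor
  · rw [le_div_iff₀ hb']
    exact_mod_cast Int.ediv_mul_le a (by omega)
  · rw [div_lt_iff₀ hb']
    exact_mod_cast Int.lt_ediv_add_one_mul_self a hb

noncomputable def wPoly (d : ℕ) (p : Fin (d + 1) → ℤ) (k : ℕ) : Polynomial ℤ :=
  ∑ i ∈ Finset.range (k + 1), C (p ⟨d - i, by omega⟩) * X ^ (k - i)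

lemma X_mul_wPoly (d : ℕ) (p : Fin (d + 1) → ℤ) (k : ℕ) :
    X * wPoly d p k = wPoly d p (k + 1) - C (p ⟨d - (k + 1), by omega⟩) := by
  rw [wPoly, wPoly]
  rw [show k + 1 + 1 = (k+1) + 1 from rfl, Finset.sum_range_succ (n := k + 1)]
  have h1 : (k + 1 : ℕ) - (k + 1) = 0 := by omega
  rw [h1, pow_zero, mul_one, add_sub_cancel_right, Finset.mul_sum]
  refine Finset.sum_congr rfl fun i hi => ?_
  have hik : i ≤ k := by simpa [Nat.lt_succ_iff] using hi
  have h2 : k + 1 - i = (k - i) + 1 := by omega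
  rw [h2, pow_succ]
  ring

lemma wPoly_top (d : ℕ) (p : Fin (d + 1) → ℤ) : wPoly d p d = cnsPoly d p := by
  set f : ℕ → Polynomial ℤ :=
    fun i => C (p ⟨i % (d+1), Nat.mod_lt _ (by omega)⟩) * X ^ (i % (d+1)) with hf
  have hfeq : ∀ i (hi : i < d + 1), f i = C (p ⟨i, hi⟩) * X ^ i := by
    intro i hi
    have : i % (d+1) = i := Nat.mod_eq_of_lt (by omega)
    simp only [hf, this]
  calc wPoly d p d = ∑ j ∈ Finset.range (d+1), f (d + 1 - 1 - j) := by
        rw [wPoly]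
        refine Finset.sum_congr rfl fun i hi => ?_
        simp only [Finset.mem_range] at hi
        rw [show d + 1 - 1 - i = d - i from by omega, hfeq (d - i) (by omega)]
    _ = ∑ j ∈ Finset.range (d+1), f j := Finset.sum_range_reflect f (d+1)
    _ = ∑ j : Fin (d+1), f (j : ℕ) := (Fin.sum_univ_eq_sum_range f (d+1)).symm
    _ = cnsPoly d p := by
        rw [cnsPoly]
        refine Finset.sum_congr rfl fun j _ => ?_
        rw [hfeq (j : ℕ) (by omega)]

lemma mk_C (d : ℕ) (p : Fin (d + 1) → ℤ) (a : ℤ) :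
    Ideal.Quotient.mk (Ideal.span {cnsPoly d p}) (C a) = (a : CnsRing d p) :=
  eq_intCast ((Ideal.Quotient.mk (Ideal.span {cnsPoly d p})).comp C) a

lemma brunotteW_eq_mk (d : ℕ) (p : Fin (d + 1) → ℤ) (k : Fin d) :
    brunotteW d p k = Ideal.Quotient.mk _ (wPoly d p (k : ℕ)) := by
  rw [brunotteW, wPoly, map_sum]
  refine Finset.sum_congr rfl fun i hi => ?_
  rw [map_mul, map_pow, mk_C]
  rfl

lemma mk_cnsPoly (d : ℕ) (p : Fin (d + 1) → ℤ) :
    Ideal.Quotient.mk (Ideal.span {cnsPoly d p}) (cnsPoly d p) = 0 :=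
  Ideal.Quotient.eq_zero_iff_mem.mpr (Ideal.subset_span (Set.mem_singleton _))

lemma sum_S_split (e : ℕ) (p : Fin (e + 1 + 1) → ℤ) (z : Fin (e+1) → ℤ)
    (S : ℤ) (hSdef : S = ∑ k : Fin (e+1), z k * p ⟨e + 1 - (k : ℕ), by omega⟩) :
    S = z 0 * p (Fin.last (e+1)) + ∑ i : Fin e, z i.succ * p ⟨e - (i:ℕ), by omega⟩ := by
  have h0 : (⟨e + 1 - (((0 : Fin (e+1))) : ℕ), by omega⟩ : Fin (e+2)) = Fin.last (e+1) :=
    Fin.ext (by simp)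
  have hsucc : ∀ i : Fin e,
      (⟨e + 1 - ((i.succ : Fin (e+1)) : ℕ), by omega⟩ : Fin (e+2))
        = (⟨e - (i:ℕ), by omega⟩ : Fin (e+2)) :=
    fun i => Fin.ext (by simp only [Fin.val_succ]; omega)
  rw [hSdef, Fin.sum_univ_succ, h0]
  exact congrArg _ (Finset.sum_congr rfl fun i _ => by rw [hsucc])

set_option maxHeartbeats 1000000 in
/-- the backward division identity on the Brunotte module:
`∑ z_k w_k = c + x·∑ (τ_r(z))_k w_k` with
`c = S - p_0 ⌊S/p_0⌋ ∈ {0,…,p_0-1}`, `S = z_0 p_d + ⋯ + z_{d-1} p_1`;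
in particular the backward division mapping restricted to the Brunotte module
is conjugate to `τ_r`. -/
theorem brunotte_conjugacy (d : ℕ) (hd : 1 ≤ d) (p : Fin (d + 1) → ℤ)
    (hp0 : 2 ≤ p 0) (hpd : p (Fin.last d) ≠ 0)
    (r : Fin d → ℝ)
    (hr : ∀ j : Fin d, r j = (p ⟨d - (j : ℕ), by omega⟩ : ℝ) / (p 0 : ℝ))
    (z : Fin d → ℤ) :
    let S : ℤ := ∑ k : Fin d, z k * p ⟨d - (k : ℕ), by omega⟩
    let c : ℤ := S - p 0 * ⌊(S : ℝ) / (p 0 : ℝ)⌋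
    (0 ≤ c ∧ c < p 0) ∧
      ∑ k : Fin d, z k • brunotteW d p k
        = (c : CnsRing d p)
          + cnsX d p * ∑ k : Fin d, (srsMap d r z) k • brunotteW d p k := by
  intro S c
  have hp0' : (0:ℤ) < p 0 := by omega
  have hc : c = S % p 0 := by
    show S - p 0 * ⌊(S:ℝ)/(p 0 : ℝ)⌋ = S % p 0
    rw [floor_int_div' S (p 0) hp0', Int.emod_def]
  refine ⟨⟨by rw [hc]; exact Int.emod_nonneg S (by omega),
          by rw [hc]; exact Int.emod_lt_of_pos S hp0'⟩, ?_⟩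
  obtain ⟨e, rfl⟩ : ∃ e, d = e + 1 := ⟨d - 1, by omega⟩
  -- the floor appearing in srsMap equals ⌊S/p0⌋
  have hfloor2 : ⌊∑ j : Fin (e+1), r j * (z j : ℝ)⌋ = ⌊(S:ℝ)/(p 0 : ℝ)⌋ := by
    congr 1
    have hp0R : ((p 0 : ℤ) : ℝ) ≠ 0 := by exact_mod_cast hp0'.ne'
    rw [show (S : ℝ) = ∑ k : Fin (e+1), (z k : ℝ) * (p ⟨e + 1 - (k : ℕ), by omega⟩ : ℝ) by
      push_cast [S]; rfl]
    rw [Finset.sum_div]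
    refine Finset.sum_congr rfl fun j _ => ?_
    rw [hr j]
    field_simp
  -- values of srsMap
  have hτc : ∀ i : Fin e, srsMap (e+1) r z i.castSucc = z i.succ := by
    intro i
    have h : (i.castSucc : ℕ) + 1 < e + 1 := by rw [Fin.coe_castSucc]; omega
    simp only [srsMap, dif_pos h]
    congr 1
  have hτl : srsMap (e+1) r z (Fin.last e) = -⌊(S:ℝ)/(p 0 : ℝ)⌋ := by
    simp only [srsMap, Fin.val_last]
    rw [dif_neg (by omega), hfloor2]
  -- multiplication rules for x against the Brunotte basis
  have hxw : ∀ i : Fin e,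
      cnsX (e+1) p * brunotteW (e+1) p i.castSucc
        = brunotteW (e+1) p i.succ - ((p ⟨e + 1 - ((i:ℕ)+1), by omega⟩ : ℤ) : CnsRing (e+1) p) := by
    intro i
    rw [brunotteW_eq_mk, brunotteW_eq_mk, cnsX, ← map_mul,
      show (i.castSucc : ℕ) = (i : ℕ) from rfl, X_mul_wPoly, map_sub,
      show (i.succ : ℕ) = (i : ℕ) + 1 from rfl, mk_C]
  have hxwl : cnsX (e+1) p * brunotteW (e+1) p (Fin.last e)
      = -((p 0 : ℤ) : CnsRing (e+1) p) := by
    rw [brunotteW_eq_mk, cnsX, ← map_mul, show ((Fin.last e : Fin (e+1)) : ℕ) = e from rfl,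
      X_mul_wPoly, wPoly_top, map_sub, mk_cnsPoly, zero_sub]
    rw [show (⟨e + 1 - (e + 1), by omega⟩ : Fin (e+2)) = 0 from Fin.ext (by simp), mk_C]
  -- now the ring computation
  have hS : S = z 0 * p (Fin.last (e+1))
      + ∑ i : Fin e, z i.succ * p ⟨e - (i:ℕ), by omega⟩ :=
    sum_S_split e p z S rfl
  have hw0 : brunotteW (e+1) p 0 = ((p (Fin.last (e+1)) : ℤ) : CnsRing (e+1) p) := by
    rw [brunotteW_eq_mk]
    simp only [Fin.val_zero, wPoly]
    rw [Finset.sum_range_one]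
    simp only [Nat.sub_zero, pow_zero, mul_one]
    rw [mk_C]
    norm_cast
  -- expand both sides
  simp only [zsmul_eq_mul]
  rw [Fin.sum_univ_succ (f := fun k => (z k : CnsRing (e+1) p) * brunotteW (e+1) p k)]
  rw [Fin.sum_univ_castSucc (f := fun k => ((srsMap (e+1) r z k : ℤ) : CnsRing (e+1) p) * brunotteW (e+1) p k)]
  simp only [hτc, hτl]
  rw [mul_add, Finset.mul_sum]
  simp only [mul_left_comm (cnsX (e+1) p), hxw, hxwl]
  simp only [mul_sub, Finset.sum_sub_distrib]
  rw [hw0, hc, Int.emod_def, floor_int_div' S (p 0) hp0']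
  have hS' : ((S:ℤ) : CnsRing (e+1) p)
      = ((z 0 : ℤ) : CnsRing (e+1) p) * ((p (Fin.last (e+1)) : ℤ) : CnsRing (e+1) p)
        + ∑ i : Fin e, ((z i.succ : ℤ) : CnsRing (e+1) p)
            * ((p ⟨e - (i:ℕ), by omega⟩ : ℤ) : CnsRing (e+1) p) := by
    rw [hS]; push_cast; rfl
  push_cast
  linear_combination -hS'
end

section
/- Let β > 1 be an algebraic integer of degree d+1 (d ≥ 1) with minimal polynomial X^{d+1} + b_d X^d + ⋯ + b_0 over ℤ, and define r = (r_0,…,r_{d-1}) ∈ ℝ^d by X^{d+1} + b_d X^d + ⋯ + b_0 = (X − β)(X^d + r_{d-1}X^{d-1} + ⋯ + r_0). Fix z ∈ ℤ^d and set v_n = {r·τ_r^{n-1}(z)} for n ≥ 1. Then for all n ≥ 1: v_n = T_β^{n-1}({r·z}) and ⌊β v_n⌋ = β v_n − v_{n+1}; in other words, the digits a_n = ⌊β T_β^{n-1}({r·z})⌋ of the beta-expansion of {r·z} satisfy a_n = β v_n − v_{n+1}. -/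
open Polynomial

theorem coeffLow (n : ℕ) (c : Fin n → ℝ) (k : ℕ) (hk : k < n) :
    (X ^ n + ∑ i : Fin n, C (c i) * X ^ (i:ℕ)).coeff k = c ⟨k, hk⟩ := by
  rw [coeff_add, coeff_X_pow, finset_sum_coeff]
  simp only [coeff_C_mul, coeff_X_pow]
  rw [Finset.sum_eq_single ⟨k, hk⟩]
  · simp [hk.ne]
  · intro i _ hi
    have : (i:ℕ) ≠ k := fun h => hi (Fin.ext h)
    simp only [mul_ite, mul_one, mul_zero, ite_eq_right_iff]
    exact fun h => absurd h.symm this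
  · simp

theorem coeffTop (n : ℕ) (c : Fin n → ℝ) :
    (X ^ n + ∑ i : Fin n, C (c i) * X ^ (i:ℕ)).coeff n = 1 := by
  rw [coeff_add, coeff_X_pow, finset_sum_coeff]
  simp only [coeff_C_mul, coeff_X_pow]
  rw [Finset.sum_eq_zero]
  · simp
  · intro i _
    have := i.isLt
    simp only [mul_ite, mul_one, mul_zero, ite_eq_right_iff]
    omega

theorem core_sum (e : ℕ) (β : ℝ) (rr bb ww tt : ℕ → ℝ) (m : ℝ)
    (h0 : β * rr 0 = -bb 0)
    (hkey : ∀ j, β * rr (j+1) = rr j - bb (j+1))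
    (hβ : β = rr e - bb (e+1))
    (htt : ∀ k < e, tt k = ww (k+1)) (htte : tt e = -m) :
    β * ((∑ k ∈ Finset.range (e+1), rr k * ww k) - m)
      - ∑ k ∈ Finset.range (e+1), rr k * tt k
      = -(∑ k ∈ Finset.range (e+1), bb k * ww k) + bb (e+1) * m := by
  have hsum1 : ∑ k ∈ Finset.range (e+1), β * (rr k * ww k)
      = (∑ k ∈ Finset.range e, (rr k * ww (k+1) - bb (k+1) * ww (k+1))) + -bb 0 * ww 0 := by
    rw [Finset.sum_range_succ']
    congr 1
    · exact Finset.sum_congr rfl fun k _ => by rw [← mul_assoc, hkey k, sub_mul]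
    · rw [← mul_assoc, h0]
  have hsum2 : ∑ k ∈ Finset.range (e+1), rr k * tt k
      = (∑ k ∈ Finset.range e, rr k * ww (k+1)) - rr e * m := by
    rw [Finset.sum_range_succ, htte, mul_neg, ← sub_eq_add_neg]
    exact congrArg (· - rr e * m)
      (Finset.sum_congr rfl fun k hk => by rw [htt k (Finset.mem_range.mp hk)])
  have hsum3 : ∑ k ∈ Finset.range (e+1), bb k * ww k
      = (∑ k ∈ Finset.range e, bb (k+1) * ww (k+1)) + bb 0 * ww 0 := Finset.sum_range_succ' _ _
  rw [mul_sub, Finset.mul_sum, hsum1, hsum2, hsum3, Finset.sum_sub_distrib, hβ]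
  ring

/-- with `v_n = {r·τ_r^{n-1}(z)}`, one has `v_n = T_β^{n-1}({r·z})` and
`a_n = ⌊β T_β^{n-1}({r·z})⌋ = β v_n - v_{n+1}` for all `n ≥ 1`. -/
theorem srs_beta_digits (d : ℕ) (hd : 1 ≤ d) (β : ℝ) (hβ : 1 < β)
    (hint : IsIntegral ℤ β) (b : Fin (d + 1) → ℤ)
    (hmin : minpoly ℤ β
      = X ^ (d + 1) + ∑ i : Fin (d + 1), C (b i) * X ^ (i : ℕ))
    (r : Fin d → ℝ)
    (hfac : (X ^ (d + 1) + ∑ i : Fin (d + 1), C ((b i : ℝ)) * X ^ (i : ℕ))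
      = (X - C β) * (X ^ d + ∑ i : Fin d, C (r i) * X ^ (i : ℕ)))
    (z : Fin d → ℤ) :
    let v : ℕ → ℝ := fun n => Int.fract (∑ j, r j * (((srsMap d r)^[n - 1] z) j : ℝ))
    ∀ n : ℕ, 1 ≤ n →
      v n = (betaT β)^[n - 1] (Int.fract (∑ j, r j * (z j : ℝ)))
      ∧ ((⌊β * v n⌋ : ℝ) = β * v n - v (n + 1)) := by
  intro v
  obtain ⟨e, rfl⟩ : ∃ e, d = e + 1 := ⟨d - 1, by omega⟩
  set P : ℝ[X] := X ^ (e + 1 + 1) + ∑ i : Fin (e + 1 + 1), C ((b i : ℝ)) * X ^ (i : ℕ) with hP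
  set Q : ℝ[X] := X ^ (e + 1) + ∑ i : Fin (e + 1), C (r i) * X ^ (i : ℕ) with hQ
  set rr : ℕ → ℝ := fun k => Q.coeff k with hrr
  set bb : ℕ → ℝ := fun k => P.coeff k with hbb
  have h0 : β * rr 0 = -bb 0 := by
    have : P.coeff 0 = -(β * Q.coeff 0) := by
      rw [hfac, sub_mul, coeff_sub, mul_coeff_zero, coeff_C_mul, coeff_X_zero, zero_mul, zero_sub]
    simp only [hrr, hbb, this]; ring
  have hkey : ∀ j, β * rr (j+1) = rr j - bb (j+1) := by
    intro j
    have : P.coeff (j+1) = Q.coeff j - β * Q.coeff (j+1) := by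
      rw [hfac, sub_mul, coeff_sub, coeff_X_mul, coeff_C_mul]
    simp only [hrr, hbb, this]; ring
  have hβe : β = rr e - bb (e+1) := by
    have h1 : rr (e+1) = 1 := coeffTop (e+1) r
    have := hkey e
    rw [h1, mul_one] at this
    linarith
  -- the main one-step identity
  have step : ∀ w : Fin (e+1) → ℤ,
      Int.fract (β * Int.fract (∑ j, r j * (w j : ℝ)))
        = Int.fract (∑ j, r j * ((srsMap (e+1) r w j : ℤ) : ℝ)) := by
    intro w
    set m : ℤ := ⌊∑ j, r j * (w j : ℝ)⌋ with hm
    set ww : ℕ → ℝ := fun k => if h : k < e + 1 then (w ⟨k, h⟩ : ℝ) else 0 with hww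
    set tt : ℕ → ℝ := fun k => if k + 1 < e + 1 then ww (k+1) else (-(m:ℝ)) with htt
    have hS : (∑ j, r j * (w j : ℝ)) = ∑ k ∈ Finset.range (e+1), rr k * ww k := by
      rw [← Fin.sum_univ_eq_sum_range (fun k => rr k * ww k) (e+1)]
      refine Finset.sum_congr rfl fun j _ => ?_
      simp only [hrr, hww, hQ, coeffLow (e+1) r (j : ℕ) j.isLt, dif_pos j.isLt, Fin.eta]
    have hS' : (∑ j, r j * ((srsMap (e+1) r w j : ℤ) : ℝ))
        = ∑ k ∈ Finset.range (e+1), rr k * tt k := by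
      rw [← Fin.sum_univ_eq_sum_range (fun k => rr k * tt k) (e+1)]
      refine Finset.sum_congr rfl fun j _ => ?_
      have hc : rr (j : ℕ) = r j := by
        simp only [hrr, hQ, coeffLow (e+1) r (j : ℕ) j.isLt, Fin.eta]
      by_cases h : (j : ℕ) + 1 < e + 1
      · simp only [htt, hww, srsMap, dif_pos h, if_pos h, hc]
      · simp only [htt, hww, srsMap, dif_neg h, if_neg h, hc, ← hm]
        push_cast
        ring
    have hB : ∀ (k : ℕ) (hk : k < e + 1 + 1), bb k = (b ⟨k, hk⟩ : ℝ) := fun k hk => by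
      simp only [hbb, hP, coeffLow (e+1+1) (fun i => (b i : ℝ)) k hk]
    have hreal := core_sum e β rr bb ww tt (m : ℝ) h0 hkey hβe
      (fun k hk => by simp only [htt]; rw [if_pos (by omega)])
      (by simp only [htt]; rw [if_neg (by omega)])
    refine Int.fract_eq_fract.mpr
      ⟨(-∑ j : Fin (e+1), b j.castSucc * w j) + b (Fin.last (e+1)) * m, ?_⟩
    have hBsum : (∑ k ∈ Finset.range (e+1), bb k * ww k)
        = ∑ j : Fin (e+1), (b j.castSucc : ℝ) * (w j : ℝ) := by
      rw [← Fin.sum_univ_eq_sum_range (fun k => bb k * ww k) (e+1)]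
      refine Finset.sum_congr rfl fun j _ => ?_
      have : bb (j : ℕ) = (b j.castSucc : ℝ) := by
        rw [hB (j : ℕ) (by omega)]
        congr 1
      simp only [this, hww, dif_pos j.isLt, Fin.eta]
    have hBlast : bb (e+1) = (b (Fin.last (e+1)) : ℝ) := by
      rw [hB (e+1) (by omega)]
      congr 1
    rw [Int.fract]
    rw [← hm, hS, hS']
    push_cast
    rw [← hBsum, ← hBlast]
    linarith [hreal]
  -- conclude
  have hv : ∀ k : ℕ, v (k + 1) = (betaT β)^[k] (Int.fract (∑ j, r j * (z j : ℝ))) := by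
    intro k
    induction k with
    | zero => simp [v]
    | succ k ih =>
      have h1 : v (k + 1 + 1) = Int.fract (∑ j, r j *
          ((srsMap (e+1) r ((srsMap (e+1) r)^[k] z) j : ℤ) : ℝ)) := by
        simp only [v, Nat.add_sub_cancel, Function.iterate_succ_apply']
      rw [h1, ← step ((srsMap (e+1) r)^[k] z), Function.iterate_succ_apply']
      have h2 : Int.fract (∑ j, r j * (((srsMap (e+1) r)^[k] z j : ℤ) : ℝ)) = v (k+1) := by
        simp only [v, Nat.add_sub_cancel]
      rw [h2, ih, betaT]
  intro n hn
  obtain ⟨k, rfl⟩ : ∃ k, n = k + 1 := ⟨n - 1, by omega⟩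
  refine ⟨by simpa using hv k, ?_⟩
  have h3 : v (k + 1 + 1) = Int.fract (β * v (k + 1)) := by
    rw [hv (k+1), hv k, Function.iterate_succ_apply', betaT]
  rw [h3, Int.fract]
  ring
end

section
/- Let d ≥ 1 and r = (r_0,…,r_{d-1}) ∈ ℝ^d. If every complex root of χ_r(X) = X^d + r_{d-1}X^{d-1} + ⋯ + r_0 has modulus strictly less than 1 (i.e., r ∈ E_d), then r ∈ D_d: for every z ∈ ℤ^d the orbit (τ_r^k(z))_{k≥0} is ultimately periodic, i.e., there exist k ∈ ℕ and l ≥ 1 with τ_r^{k+l}(z) = τ_r^k(z). -/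
/-!
Write `s n` for the first coordinate of `τ_r^n z`, so that `τ_r^n z = (s n, …, s (n + d - 1))`.
By the definition of `τ_r`, the polynomial `χ_r` evaluated at the shift operator `S` on sequences
sends `s` to the sequence of fractional parts `{r_0 s n + ⋯ + r_{d-1} s (n + d - 1)}`, which is
bounded. Over `ℂ`, `χ_r = ∏ (X - μ)` with `|μ| < 1`, and each factor `S - μ` reflects
boundedness: `y (n + 1) = μ y n + O(1)` keeps `y` bounded. Hence `s` is bounded, the orbit lies in
a finite subset of `ℤ^d`, and by pigeonhole it is ultimately periodic.
-/

open Polynomial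

open Bornology Set

theorem Function.exists_iterate_add_eq_of_finite_range {α : Type*} {f : α → α} {z : α}
    (h : (range fun n => f^[n] z).Finite) : ∃ k l : ℕ, 1 ≤ l ∧ f^[k + l] z = f^[k] z := by
  obtain ⟨m, n, hmn, he⟩ := h.exists_lt_map_eq_of_forall_mem (f := fun n => f^[n] z) mem_range_self
  exact ⟨m, n - m, by omega, by rw [Nat.add_sub_cancel' hmn.le]; exact he.symm⟩

def seqShift (R : Type*) [Semiring R] : Module.End R (ℕ → R) :=
  LinearMap.funLeft R R Nat.succ

@[simp]
theorem seqShift_apply {R : Type*} [Semiring R] (x : ℕ → R) (n : ℕ) : seqShift R x n = x (n + 1) :=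
  rfl

theorem seqShift_pow_apply {R : Type*} [Semiring R] (k : ℕ) (x : ℕ → R) (n : ℕ) :
    (seqShift R ^ k) x n = x (n + k) := by
  induction k generalizing x with
  | zero => rfl
  | succ k ih => rw [pow_succ, Module.End.mul_apply, ih, seqShift_apply, Nat.add_assoc]

section BoundedSequences

variable {𝕜 : Type*} [NormedField 𝕜]

theorem isBounded_range_of_isBounded_range_aeval_X_sub_C {μ : 𝕜} (hμ : ‖μ‖ < 1) {x : ℕ → 𝕜}
    (h : IsBounded (range (aeval (seqShift 𝕜) (X - C μ) x))) : IsBounded (range x) := by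
  obtain ⟨B, hB⟩ := isBounded_iff_forall_norm_le.1 h
  have hstep : ∀ n, ‖x (n + 1) - μ * x n‖ ≤ B := fun n => by
    simpa using hB _ (mem_range_self n)
  set M := max ‖x 0‖ (B / (1 - ‖μ‖))
  have hBM : B ≤ (1 - ‖μ‖) * M := by
    rw [← div_le_iff₀' (by linarith)]
    exact le_max_right _ _
  refine isBounded_iff_forall_norm_le.2 ⟨M, forall_mem_range.2 fun n => ?_⟩
  induction n with
  | zero => exact le_max_left _ _
  | succ n ih =>
    calc ‖x (n + 1)‖ = ‖μ * x n + (x (n + 1) - μ * x n)‖ := by ring_nf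
      _ ≤ ‖μ‖ * ‖x n‖ + B := (norm_add_le _ _).trans (by rw [norm_mul]; gcongr; exact hstep n)
      _ ≤ M := by nlinarith [norm_nonneg μ]

theorem isBounded_range_of_isBounded_range_aeval_prod {s : Multiset 𝕜} (hs : ∀ μ ∈ s, ‖μ‖ < 1)
    {x : ℕ → 𝕜} (h : IsBounded (range (aeval (seqShift 𝕜) (s.map fun μ => X - C μ).prod x))) :
    IsBounded (range x) := by
  induction s using Multiset.induction_on generalizing x with
  | empty => simpa using h
  | cons μ s ih =>
    rw [Multiset.map_cons, Multiset.prod_cons, map_mul, Module.End.mul_apply] at h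
    exact ih (fun ν hν => hs ν (Multiset.mem_cons_of_mem hν))
      (isBounded_range_of_isBounded_range_aeval_X_sub_C (hs μ (Multiset.mem_cons_self μ s)) h)

theorem isBounded_range_of_isBounded_range_aeval [IsAlgClosed 𝕜] {p : 𝕜[X]} (hp : p ≠ 0)
    (hroots : ∀ μ, p.IsRoot μ → ‖μ‖ < 1) {x : ℕ → 𝕜}
    (h : IsBounded (range (aeval (seqShift 𝕜) p x))) : IsBounded (range x) := by
  rw [← C_leadingCoeff_mul_prod_multiset_X_sub_C (IsAlgClosed.card_roots_eq_natDegree (p := p)),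
    map_mul, Module.End.mul_apply, aeval_C, Module.algebraMap_end_apply] at h
  refine isBounded_range_of_isBounded_range_aeval_prod
    (fun μ hμ => hroots μ (isRoot_of_mem_roots hμ)) ?_
  simpa only [← range_smul, Pi.smul_apply, inv_smul_smul₀ (leadingCoeff_ne_zero.2 hp)] using
    h.smul₀ p.leadingCoeff⁻¹

end BoundedSequences

section ShiftRadixSystem

variable {d : ℕ} {r : Fin d → ℝ}

theorem srsMap_iterate_apply (z : Fin d → ℤ) (n i : ℕ) (hi : i < d) :
    (srsMap d r)^[n] z ⟨i, hi⟩ = (srsMap d r)^[n + i] z ⟨0, by omega⟩ := by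
  induction i generalizing n with
  | zero => rfl
  | succ i ih =>
    have hτ : (srsMap d r)^[n + 1] z ⟨i, by omega⟩ = (srsMap d r)^[n] z ⟨i + 1, hi⟩ := by
      rw [Function.iterate_succ_apply', srsMap, dif_pos hi]
    rw [← hτ, ih, Nat.add_right_comm, Nat.add_assoc]

theorem srsMap_iterate_add_dim (hd : 0 < d) (z : Fin d → ℤ) (n : ℕ) :
    (srsMap d r)^[n + d] z ⟨0, hd⟩ =
      -⌊∑ j : Fin d, r j * ((srsMap d r)^[n + j] z ⟨0, hd⟩ : ℝ)⌋ := by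
  have hlast := srsMap_iterate_apply (r := r) z (n + 1) (d - 1) (by omega)
  rw [show n + 1 + (d - 1) = n + d by omega, Function.iterate_succ_apply', srsMap,
    dif_neg (by simp; omega)] at hlast
  rw [← hlast]
  congr! 5 with j
  exact srsMap_iterate_apply z n j j.2

theorem aeval_seqShift_srsMap_iterate (hd : 0 < d) (z : Fin d → ℤ) (n : ℕ) :
    aeval (seqShift ℂ) (X ^ d + ∑ i : Fin d, C (r i : ℂ) * X ^ (i : ℕ))
        (fun n => ((srsMap d r)^[n] z ⟨0, hd⟩ : ℂ)) n =
      Int.fract (∑ j : Fin d, r j * ((srsMap d r)^[n + j] z ⟨0, hd⟩ : ℝ)) := by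
  simp only [map_add, map_sum, map_mul, map_pow, aeval_X, aeval_C, LinearMap.add_apply,
    Module.End.mul_apply, Module.algebraMap_end_apply, Pi.add_apply, seqShift_pow_apply,
    LinearMap.sum_apply, Finset.sum_apply, Pi.smul_apply, smul_eq_mul, srsMap_iterate_add_dim,
    Int.fract]
  push_cast
  ring

theorem finite_range_srsMap_iterate (hd : 0 < d) {z : Fin d → ℤ}
    (h : IsBounded (range fun n => (srsMap d r)^[n] z ⟨0, hd⟩)) :
    (range fun n => (srsMap d r)^[n] z).Finite := by
  have hsub : (range fun n => (srsMap d r)^[n] z) ⊆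
      univ.pi fun _ => range fun n => (srsMap d r)^[n] z ⟨0, hd⟩ := by
    rintro _ ⟨n, rfl⟩ i -
    exact ⟨n + i, (srsMap_iterate_apply z n i i.2).symm⟩
  exact isCompact_iff_finite.1 <| Metric.isCompact_of_isClosed_isBounded (isClosed_discrete _)
    ((IsBounded.pi fun _ => h).subset hsub)

end ShiftRadixSystem

/-- `E_d ⊆ D_d`: if every complex root of
`χ_r(X) = X^d + r_{d-1}X^{d-1} + ⋯ + r_0` has modulus `< 1`, then every orbit of `τ_r`
is ultimately periodic. -/
theorem schurCohn_subset_Dd (d : ℕ) (hd : 1 ≤ d) (r : Fin d → ℝ)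
    (hroots : ∀ μ : ℂ,
        (X ^ d + ∑ i : Fin d, C ((r i : ℂ)) * X ^ (i : ℕ)).IsRoot μ → ‖μ‖ < 1) :
    ∀ z : Fin d → ℤ, ∃ k l : ℕ, 1 ≤ l ∧ (srsMap d r)^[k + l] z = (srsMap d r)^[k] z := by
  intro z
  set s : ℕ → ℤ := fun n => (srsMap d r)^[n] z ⟨0, hd⟩
  have hmonic : (X ^ d + ∑ i : Fin d, C (r i : ℂ) * X ^ (i : ℕ)).Monic :=
    monic_X_pow_add (degree_sum_fin_lt _)
  have hfract : IsBounded (range (aeval (seqShift ℂ)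
      (X ^ d + ∑ i : Fin d, C (r i : ℂ) * X ^ (i : ℕ)) fun n => (s n : ℂ))) := by
    refine isBounded_iff_forall_norm_le.2 ⟨1, forall_mem_range.2 fun n => ?_⟩
    rw [aeval_seqShift_srsMap_iterate, Complex.norm_real, Real.norm_of_nonneg (Int.fract_nonneg _)]
    exact (Int.fract_lt_one _).le
  have hs : IsBounded (range s) :=
    (Complex.isometry_intCast.antilipschitz.isBounded_preimage
      (isBounded_range_of_isBounded_range_aeval hmonic.ne_zero hroots hfract)).subset
      (range_subset_iff.2 fun n => ⟨n, rfl⟩)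
  exact Function.exists_iterate_add_eq_of_finite_range (finite_range_srsMap_iterate hd hs)
end

section
/- Let d ≥ 1 and r = (r_0,…,r_{d-1}) ∈ ℝ^d. If r ∈ D_d, i.e., for every z ∈ ℤ^d the orbit (τ_r^k(z))_{k≥0} is ultimately periodic, then every complex root of χ_r(X) = X^d + r_{d-1}X^{d-1} + ⋯ + r_0 has modulus at most 1 (equivalently, r lies in the closure of the Schur–Cohn region E_d). -/
/-!
If `μ` is a root of `χ_r` with `|μ| > 1`, the coefficients of `χ_r / (X - μ)` define a linear form
`f` on `ℤ^d` that is a left eigenvector, for `μ`, of the companion matrix; since `τ_r` is that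
linear map up to rounding in the last coordinate, `f (τ_r z) = μ f z + {r · z}`. So once
`|f z| > 1 / (|μ| - 1)`, `|f|` strictly increases along the orbit of `z`, which then cannot be
ultimately periodic; and such `z` exist because `f (N e_{d-1}) = N`.
-/

open Polynomial

section Escape

variable {α 𝕜 : Type*} [NormedDivisionRing 𝕜] {g : α → α} {F : α → 𝕜} {μ : 𝕜}

theorem norm_lt_norm_apply_of_norm_sub_mul_le_one {z : α} (hμ : 1 < ‖μ‖)
    (hF : ‖F (g z) - μ * F z‖ ≤ 1) (hz : (‖μ‖ - 1)⁻¹ < ‖F z‖) : ‖F z‖ < ‖F (g z)‖ := by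
  have hgrowth : 1 < (‖μ‖ - 1) * ‖F z‖ := (inv_lt_iff_one_lt_mul₀' (sub_pos.2 hμ)).mp hz
  have htriangle : ‖μ * F z‖ - ‖F (g z)‖ ≤ ‖F (g z) - μ * F z‖ :=
    norm_sub_rev (F (g z)) _ ▸ norm_sub_norm_le _ _
  rw [norm_mul] at htriangle
  linarith

theorem strictMono_norm_iterate_of_norm_sub_mul_le_one (hμ : 1 < ‖μ‖)
    (hF : ∀ z, ‖F (g z) - μ * F z‖ ≤ 1) {z : α} (hz : (‖μ‖ - 1)⁻¹ < ‖F z‖) :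
    StrictMono fun n => ‖F (g^[n] z)‖ := by
  have hstep := fun {z} => norm_lt_norm_apply_of_norm_sub_mul_le_one (z := z) hμ (hF z)
  have hlarge : ∀ n, (‖μ‖ - 1)⁻¹ < ‖F (g^[n] z)‖ := by
    intro n
    induction n with
    | zero => exact hz
    | succ n ih => rw [Function.iterate_succ_apply']; exact ih.trans (hstep ih)
  refine strictMono_nat_of_lt_succ fun n => ?_
  rw [Function.iterate_succ_apply']
  exact hstep (hlarge n)

theorem iterate_add_ne_iterate_of_norm_sub_mul_le_one (hμ : 1 < ‖μ‖)
    (hF : ∀ z, ‖F (g z) - μ * F z‖ ≤ 1) {z : α} (hz : (‖μ‖ - 1)⁻¹ < ‖F z‖) {k l : ℕ}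
    (hl : 0 < l) : g^[k + l] z ≠ g^[k] z := fun h =>
  (strictMono_norm_iterate_of_norm_sub_mul_le_one hμ hF hz (Nat.lt_add_of_pos_right hl)).ne'
    (congrArg (‖F ·‖) h)

end Escape

namespace Polynomial

variable {R : Type*} [CommRing R] {p : R[X]} {a : R}

theorem mul_coeff_zero_divByMonic_X_sub_C (h : p.IsRoot a) :
    a * (p /ₘ (X - C a)).coeff 0 = -p.coeff 0 := by
  conv_rhs => rw [← mul_divByMonic_eq_iff_isRoot.mpr h]
  simp [mul_coeff_zero]

end Polynomial

theorem srsMap_castSucc {e : ℕ} (r : Fin (e + 1) → ℝ) (z : Fin (e + 1) → ℤ) (j : Fin e) :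
    srsMap (e + 1) r z j.castSucc = z j.succ := by
  simp [srsMap, Fin.succ]

theorem srsMap_last {e : ℕ} (r : Fin (e + 1) → ℝ) (z : Fin (e + 1) → ℤ) :
    srsMap (e + 1) r z (Fin.last e) = -⌊∑ j, r j * (z j : ℝ)⌋ := by
  simp [srsMap]

noncomputable def srsCharPoly (d : ℕ) (r : Fin d → ℝ) : ℂ[X] :=
  X ^ d + ∑ i : Fin d, C ((r i : ℂ)) * X ^ (i : ℕ)

section srsCharPoly

variable {d : ℕ} (r : Fin d → ℝ)

theorem srsCharPoly_coeff (i : Fin d) : (srsCharPoly d r).coeff i = r i := by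
  simp [srsCharPoly, coeff_X_pow, i.isLt.ne, Fin.val_inj]

theorem srsCharPoly_monic : (srsCharPoly d r).Monic :=
  monic_X_pow_add (degree_sum_fin_lt _)

theorem srsCharPoly_natDegree : (srsCharPoly d r).natDegree = d := by
  rw [srsCharPoly, natDegree_add_eq_left_of_degree_lt, natDegree_X_pow]
  simpa using degree_sum_fin_lt _

end srsCharPoly

theorem pos_of_isRoot_srsCharPoly {d : ℕ} {r : Fin d → ℝ} {μ : ℂ}
    (h : (srsCharPoly d r).IsRoot μ) : 0 < d :=
  Nat.pos_of_ne_zero fun hd => by subst hd; simp [srsCharPoly] at h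

noncomputable def srsEigenform (d : ℕ) (r : Fin d → ℝ) (μ : ℂ) (z : Fin d → ℤ) : ℂ :=
  ∑ j : Fin d, (srsCharPoly d r /ₘ (X - C μ)).coeff j * z j

section srsEigenform

variable {d : ℕ} {r : Fin d → ℝ} {μ : ℂ}

theorem coeff_srsCharPoly_divByMonic_sub_one (hd : 0 < d) :
    (srsCharPoly d r /ₘ (X - C μ)).coeff (d - 1) = 1 := by
  rw [coeff_divByMonic_X_sub_C, srsCharPoly_natDegree, Nat.sub_add_cancel hd, Finset.Icc_self,
    Finset.sum_singleton, Nat.sub_self, pow_zero, one_mul]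
  simpa [srsCharPoly_natDegree] using (srsCharPoly_monic r).coeff_natDegree

theorem srsEigenform_srsMap (hμ : (srsCharPoly d r).IsRoot μ) (z : Fin d → ℤ) :
    srsEigenform d r μ (srsMap d r z)
      = μ * srsEigenform d r μ z + Int.fract (∑ j, r j * (z j : ℝ)) := by
  obtain ⟨e, rfl⟩ := Nat.exists_eq_add_one_of_ne_zero (pos_of_isRoot_srsCharPoly hμ).ne'
  simp only [srsEigenform]
  set p := srsCharPoly (e + 1) r
  set q := p /ₘ (X - C μ)
  have hlast : q.coeff e = 1 := coeff_srsCharPoly_divByMonic_sub_one e.succ_pos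
  have hzero : μ * q.coeff 0 = -p.coeff 0 := mul_coeff_zero_divByMonic_X_sub_C hμ
  have hsucc (n : ℕ) : μ * q.coeff (n + 1) = q.coeff n - p.coeff (n + 1) := by
    rw [coeff_divByMonic_X_sub_C_rec p μ n]; ring
  have hS : ∑ j, (r j : ℂ) * z j = p.coeff 0 * z 0 + ∑ j : Fin e, p.coeff (j + 1) * z j.succ := by
    rw [Fin.sum_univ_succ]
    simp [p, ← srsCharPoly_coeff r]
  rw [Fin.sum_univ_castSucc, Fin.sum_univ_succ, mul_add, Finset.mul_sum, ← Int.self_sub_floor]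
  simp only [srsMap_castSucc, srsMap_last, Fin.val_castSucc, Fin.val_last, Fin.val_succ,
    Fin.val_zero, ← mul_assoc, hlast, hzero, hsucc, sub_mul, Finset.sum_sub_distrib]
  push_cast
  rw [hS]
  ring

theorem norm_srsEigenform_srsMap_sub_mul_le_one (hμ : (srsCharPoly d r).IsRoot μ)
    (z : Fin d → ℤ) : ‖srsEigenform d r μ (srsMap d r z) - μ * srsEigenform d r μ z‖ ≤ 1 := by
  rw [srsEigenform_srsMap hμ, add_sub_cancel_left, Complex.norm_of_nonneg (Int.fract_nonneg _)]
  exact (Int.fract_lt_one _).le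

theorem exists_lt_norm_srsEigenform (hμ : (srsCharPoly d r).IsRoot μ) (B : ℝ) :
    ∃ z, B < ‖srsEigenform d r μ z‖ := by
  obtain ⟨N, hN⟩ := exists_nat_gt B
  have hd := pos_of_isRoot_srsCharPoly hμ
  refine ⟨Pi.single ⟨d - 1, Nat.sub_lt hd one_pos⟩ N, ?_⟩
  simp [srsEigenform, Pi.single_apply, coeff_srsCharPoly_divByMonic_sub_one hd, hN]

end srsEigenform

theorem Dd_subset_closure_schurCohn_general (d : ℕ) (r : Fin d → ℝ)
    (hper : ∀ z : Fin d → ℤ,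
      ∃ k l : ℕ, 1 ≤ l ∧ (srsMap d r)^[k + l] z = (srsMap d r)^[k] z) :
    ∀ μ : ℂ,
      (X ^ d + ∑ i : Fin d, C ((r i : ℂ)) * X ^ (i : ℕ)).IsRoot μ → ‖μ‖ ≤ 1 := by
  intro μ hroot
  by_contra! hμ
  obtain ⟨z, hz⟩ := exists_lt_norm_srsEigenform hroot (‖μ‖ - 1)⁻¹
  obtain ⟨k, l, hl, hperiodic⟩ := hper z
  exact iterate_add_ne_iterate_of_norm_sub_mul_le_one hμ
    (norm_srsEigenform_srsMap_sub_mul_le_one hroot) hz hl hperiodic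

/-- `D_d ⊆ closure(E_d)`: if every orbit of `τ_r` is ultimately periodic,
then every complex root of `χ_r(X) = X^d + r_{d-1}X^{d-1} + ⋯ + r_0` has modulus `≤ 1`. -/
theorem Dd_subset_closure_schurCohn (d : ℕ) (hd : 1 ≤ d) (r : Fin d → ℝ)
    (hper : ∀ z : Fin d → ℤ,
      ∃ k l : ℕ, 1 ≤ l ∧ (srsMap d r)^[k + l] z = (srsMap d r)^[k] z) :
    ∀ μ : ℂ,
      (X ^ d + ∑ i : Fin d, C ((r i : ℂ)) * X ^ (i : ℕ)).IsRoot μ → ‖μ‖ ≤ 1 :=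
  Dd_subset_closure_schurCohn_general d r hper
end

section
/- Let r = (r_0, r_1) ∈ ℝ² and suppose that either r = (x, x+1) with −1 ≤ x < 1, or r = (x, −x−1) with −1 ≤ x ≤ 0. Then r ∈ D_2 ∖ D_2^{(0)}: for every z ∈ ℤ² the orbit (τ_r^k(z))_{k≥0} is ultimately periodic, but there exists z ∈ ℤ² such that τ_r^k(z) ≠ (0,0) for all k ∈ ℕ. -/
/-!
In the first case the sum `s = z₀ + z₁` evolves under `τ_r` by `s ↦ -⌊x s⌋`, in the second the
difference `t = z₁ - z₀` evolves by `t ↦ -⌊-x t⌋`. Both maps are non-expanding on `ℤ`, and the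
constraints on `x` forbid `s ↦ -s` for `s > 0`, resp. `t ↦ t` for `t ≠ 0`. Hence eventually the sum
is fixed, resp. the difference changes sign at every step; either way `τ_r` then just swaps the two
coordinates, so every orbit ends in a cycle of length at most two. The cycle `(1,-1) ↔ (-1,1)`,
resp. the fixed point `(1,1)`, never reaches the fixed point `0`.
-/

open Function Filter

section Dynamics

variable {α β : Type*} {f g : α → α}

theorem eventually_iterate_succ_eq_of_lyapunov [PartialOrder β] [WellFoundedLT β] (V : α → β)
    (hV : ∀ a, V (f a) ≤ V a) (hfg : ∀ a, V (f a) = V a → f a = g a) (a : α) :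
    ∀ᶠ k in atTop, f^[k + 1] a = g (f^[k] a) := by
  have hanti : Antitone fun k => V (f^[k] a) :=
    antitone_nat_of_succ_le fun k => by simpa only [iterate_succ_apply'] using hV _
  obtain ⟨n, hn⟩ := WellFoundedLT.antitone_chain_condition hanti
  filter_upwards [eventually_ge_atTop n] with k hk
  rw [iterate_succ_apply']
  apply hfg
  rw [← iterate_succ_apply' f k a, ← hn k hk, hn (k + 1) (by omega)]

theorem exists_iterate_add_two_eq_of_involutive {a : α} (hg : Involutive g)
    (h : ∀ᶠ k in atTop, f^[k + 1] a = g (f^[k] a)) : ∃ K, f^[K + 2] a = f^[K] a := by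
  obtain ⟨K, hK⟩ := eventually_atTop.1 h
  exact ⟨K, by rw [hK (K + 1) (by omega), hK K le_rfl, hg]⟩

theorem Function.IsPeriodicPt.iterate_ne_of_isFixedPt {n : ℕ} {a b : α}
    (ha : IsPeriodicPt f n a) (hn : 0 < n) (hb : IsFixedPt f b) (hab : a ≠ b) (k : ℕ) :
    f^[k] a ≠ b := by
  intro hk
  apply hab
  have hle : k ≤ n * k := Nat.le_mul_of_pos_left k hn
  rw [← (ha.mul_const k).eq, ← Nat.sub_add_cancel hle, iterate_add_apply, hk,
    iterate_fixed hb]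

end Dynamics

/-- The position of `t` in the enumeration `0, 1, -1, 2, -2, …` of `ℤ`; a non-expanding map that
never sends `t > 0` to `-t` does not increase it. -/
def zigzagIndex (t : ℤ) : ℕ := 2 * t.natAbs + if t < 0 then 1 else 0

theorem zigzagIndex_injective : Injective zigzagIndex := by
  intro u t h
  simp only [zigzagIndex] at h
  split_ifs at h <;> omega

theorem zigzagIndex_le {u t : ℤ} (h : u.natAbs ≤ t.natAbs) (hne : 0 < t → u ≠ -t) :
    zigzagIndex u ≤ zigzagIndex t := by
  simp only [zigzagIndex]
  split_ifs <;> omega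

section Floor

variable {x : ℝ} {t : ℤ}

theorem natAbs_neg_floor_mul_le (hx₁ : -1 ≤ x) (hx₂ : x ≤ 1) :
    (-⌊x * t⌋).natAbs ≤ t.natAbs := by
  have h : |x * t| ≤ ((|t| : ℤ) : ℝ) := by
    rw [abs_mul, Int.cast_abs]
    exact mul_le_of_le_one_left (abs_nonneg _) (abs_le.2 ⟨hx₁, hx₂⟩)
  obtain ⟨hlo, hhi⟩ := abs_le.1 h
  have h₁ : -|t| ≤ ⌊x * t⌋ := Int.le_floor.2 (by exact_mod_cast hlo)
  have h₂ : ⌊x * t⌋ ≤ |t| := Int.floor_le_iff.2 (by linarith)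
  rw [Int.abs_eq_natAbs] at h₁ h₂
  omega

theorem neg_floor_mul_ne_neg (hx : x < 1) (ht : 0 < t) : -⌊x * t⌋ ≠ -t := by
  intro h
  rw [neg_inj] at h
  have := h ▸ Int.floor_le (x * t)
  have ht' : (0 : ℝ) < t := by exact_mod_cast ht
  nlinarith

theorem neg_floor_mul_ne_self (hx : 0 ≤ x) (ht : t ≠ 0) : -⌊x * t⌋ ≠ t := by
  intro h
  have hfl : ⌊x * t⌋ = -t := by omega
  have h₁ := hfl ▸ Int.floor_le (x * t)
  have h₂ := hfl ▸ Int.lt_floor_add_one (x * t)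
  push_cast at h₁ h₂
  rcases ht.lt_or_gt with ht | ht
  · have : (t : ℝ) ≤ -1 := by exact_mod_cast Int.le_sub_one_of_lt ht
    nlinarith
  · have : (1 : ℝ) ≤ t := by exact_mod_cast ht
    nlinarith

end Floor

section SRS

theorem isFixedPt_srsMap_zero (d : ℕ) (r : Fin d → ℝ) : IsFixedPt (srsMap d r) 0 := by
  ext i
  simp [srsMap]

theorem srsMap_two_apply (r : Fin 2 → ℝ) (w : Fin 2 → ℤ) :
    srsMap 2 r w = ![w 1, -⌊r 0 * w 0 + r 1 * w 1⌋] := by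
  ext i
  fin_cases i <;> simp [srsMap, Fin.sum_univ_two]

theorem srsMap_two_apply_zero (r : Fin 2 → ℝ) (w : Fin 2 → ℤ) : srsMap 2 r w 0 = w 1 := by
  simp [srsMap_two_apply]

theorem srsMap_two_eq_swap {r : Fin 2 → ℝ} {w : Fin 2 → ℤ} (h : srsMap 2 r w 1 = w 0) :
    srsMap 2 r w = ![w 1, w 0] := by
  rw [← h, srsMap_two_apply]
  simp

theorem involutive_swap_two : Involutive fun w : Fin 2 → ℤ => ![w 1, w 0] := by
  intro w
  ext i
  fin_cases i <;> rfl

theorem srsMap_add_apply (x : ℝ) (w : Fin 2 → ℤ) :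
    srsMap 2 ![x, x + 1] w 0 + srsMap 2 ![x, x + 1] w 1 = -⌊x * ↑(w 0 + w 1)⌋ := by
  have : x * w 0 + (x + 1) * w 1 = x * ↑(w 0 + w 1) + ↑(w 1) := by push_cast; ring
  simp only [srsMap_two_apply, Matrix.cons_val_zero, Matrix.cons_val_one]
  rw [this, Int.floor_add_intCast]
  ring

theorem srsMap_sub_apply (x : ℝ) (w : Fin 2 → ℤ) :
    srsMap 2 ![x, -x - 1] w 1 - srsMap 2 ![x, -x - 1] w 0 = -⌊-x * ↑(w 1 - w 0)⌋ := by
  have : x * w 0 + (-x - 1) * w 1 = -x * ↑(w 1 - w 0) + ↑(-w 1) := by push_cast; ring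
  simp only [srsMap_two_apply, Matrix.cons_val_zero, Matrix.cons_val_one]
  rw [this, Int.floor_add_intCast]
  ring

theorem exists_srsMap_iterate_add_two_eq_of_add {x : ℝ} (hx₁ : -1 ≤ x) (hx₂ : x < 1)
    (z : Fin 2 → ℤ) :
    ∃ K, (srsMap 2 ![x, x + 1])^[K + 2] z = (srsMap 2 ![x, x + 1])^[K] z := by
  refine exists_iterate_add_two_eq_of_involutive involutive_swap_two
    (eventually_iterate_succ_eq_of_lyapunov (fun w => zigzagIndex (w 0 + w 1)) (fun w => ?_)
      (fun w hw => srsMap_two_eq_swap ?_) z)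
  · rw [srsMap_add_apply]
    exact zigzagIndex_le (natAbs_neg_floor_mul_le hx₁ hx₂.le) (neg_floor_mul_ne_neg hx₂)
  · have := zigzagIndex_injective hw
    rw [srsMap_two_apply_zero] at this
    omega

theorem exists_srsMap_iterate_add_two_eq_of_sub {x : ℝ} (hx₁ : -1 ≤ x) (hx₂ : x ≤ 0)
    (z : Fin 2 → ℤ) :
    ∃ K, (srsMap 2 ![x, -x - 1])^[K + 2] z = (srsMap 2 ![x, -x - 1])^[K] z := by
  refine exists_iterate_add_two_eq_of_involutive involutive_swap_two
    (eventually_iterate_succ_eq_of_lyapunov (fun w => (w 1 - w 0).natAbs) (fun w => ?_)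
      (fun w hw => srsMap_two_eq_swap ?_) z)
  · rw [srsMap_sub_apply]
    exact natAbs_neg_floor_mul_le (by linarith) (by linarith)
  · have hsub := srsMap_sub_apply x w
    have hne := neg_floor_mul_ne_self (x := -x) (t := w 1 - w 0) (by linarith)
    rw [srsMap_two_apply_zero] at hsub hw
    omega

theorem isPeriodicPt_srsMap_add (x : ℝ) : IsPeriodicPt (srsMap 2 ![x, x + 1]) 2 ![1, -1] := by
  have h₁ : srsMap 2 ![x, x + 1] ![1, -1] = ![-1, 1] := by
    rw [srsMap_two_apply]
    norm_num
  have h₂ : srsMap 2 ![x, x + 1] ![-1, 1] = ![1, -1] := by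
    rw [srsMap_two_apply]
    norm_num
  simp only [IsPeriodicPt, IsFixedPt, iterate_succ_apply, iterate_zero_apply, h₁, h₂]

theorem isFixedPt_srsMap_sub (x : ℝ) : IsFixedPt (srsMap 2 ![x, -x - 1]) ![1, 1] := by
  rw [IsFixedPt, srsMap_two_apply]
  norm_num [show x + (-x - 1) = -1 by ring]

end SRS

/-- for `r = (x, x+1)` with `-1 ≤ x < 1` or `r = (x, -x-1)` with
`-1 ≤ x ≤ 0`, one has `r ∈ D_2 ∖ D_2^{(0)}`: every orbit of `τ_r` is ultimately
periodic, but some orbit never reaches `(0,0)`. -/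
theorem boundary_D2_real_roots (r : Fin 2 → ℝ)
    (hcase : (∃ x : ℝ, -1 ≤ x ∧ x < 1 ∧ r = ![x, x + 1])
      ∨ (∃ x : ℝ, -1 ≤ x ∧ x ≤ 0 ∧ r = ![x, -x - 1])) :
    (∀ z : Fin 2 → ℤ,
        ∃ k l : ℕ, 1 ≤ l ∧ (srsMap 2 r)^[k + l] z = (srsMap 2 r)^[k] z)
    ∧ (∃ z : Fin 2 → ℤ, ∀ k : ℕ, (srsMap 2 r)^[k] z ≠ 0) := by
  have periodic_of {z : Fin 2 → ℤ} (h : ∃ K, (srsMap 2 r)^[K + 2] z = (srsMap 2 r)^[K] z) :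
      ∃ k l : ℕ, 1 ≤ l ∧ (srsMap 2 r)^[k + l] z = (srsMap 2 r)^[k] z :=
    let ⟨K, hK⟩ := h; ⟨K, 2, one_le_two, hK⟩
  have escape_of {n : ℕ} {z : Fin 2 → ℤ} (hn : 0 < n) (hz : z ≠ 0)
      (h : IsPeriodicPt (srsMap 2 r) n z) : ∃ z : Fin 2 → ℤ, ∀ k : ℕ, (srsMap 2 r)^[k] z ≠ 0 :=
    ⟨z, h.iterate_ne_of_isFixedPt hn (isFixedPt_srsMap_zero 2 r) hz⟩
  rcases hcase with ⟨x, hx₁, hx₂, rfl⟩ | ⟨x, hx₁, hx₂, rfl⟩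
  · exact ⟨fun z => periodic_of (exists_srsMap_iterate_add_two_eq_of_add hx₁ hx₂ z),
      escape_of two_pos (by simp) (isPeriodicPt_srsMap_add x)⟩
  · exact ⟨fun z => periodic_of (exists_srsMap_iterate_add_two_eq_of_sub hx₁ hx₂ z),
      escape_of one_pos (by simp) ((isFixedPt_srsMap_sub x).isPeriodicPt 1)⟩
end

section
/- Let r = (r_0, r_1) ∈ ℝ² and suppose that either r = (x, −x−1) with 0 < x ≤ 1, or r = (1, 2). Then r ∉ D_2: there exists z ∈ ℤ² whose orbit (τ_r^k(z))_{k≥0} is not ultimately periodic (i.e., there are no k ∈ ℕ and l ≥ 1 with τ_r^{k+l}(z) = τ_r^k(z)). -/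
lemma srs2_apply (r : Fin 2 → ℝ) (z : Fin 2 → ℤ) :
    srsMap 2 r z = ![z 1, -⌊r 0 * (z 0 : ℝ) + r 1 * (z 1 : ℝ)⌋] := by
  funext i
  fin_cases i <;> simp [srsMap, Fin.sum_univ_two]

lemma step1 (x : ℝ) (hx0 : 0 < x) (hx1 : x ≤ 1) (a : ℤ) :
    srsMap 2 ![x, -x-1] ![a, a+1] = ![a+1, a+2] := by
  rw [srs2_apply]
  have hfloor : ⌊(![x, -x-1] : Fin 2 → ℝ) 0 * ((![a, a+1] : Fin 2 → ℤ) 0 : ℝ)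
      + (![x, -x-1] : Fin 2 → ℝ) 1 * ((![a, a+1] : Fin 2 → ℤ) 1 : ℝ)⌋ = -(a + 2) := by
    rw [Int.floor_eq_iff]
    constructor <;> · simp; nlinarith
  rw [hfloor]
  simp

lemma iter1 (x : ℝ) (hx0 : 0 < x) (hx1 : x ≤ 1) (k : ℕ) :
    (srsMap 2 ![x, -x-1])^[k] ![0, 1] = ![(k : ℤ), (k : ℤ) + 1] := by
  induction k with
  | zero => norm_num
  | succ n ih =>
      rw [Function.iterate_succ_apply', ih]
      have := step1 x hx0 hx1 (n : ℤ)
      rw [this]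
      push_cast
      congr 1 <;> ring

lemma step2 (a b : ℤ) :
    srsMap 2 ![(1:ℝ), 2] ![a, b] = ![b, -a - 2*b] := by
  rw [srs2_apply]
  have : (![(1:ℝ),2] : Fin 2 → ℝ) 0 * ((![a,b] : Fin 2 → ℤ) 0 : ℝ)
      + (![(1:ℝ),2] : Fin 2 → ℝ) 1 * ((![a,b] : Fin 2 → ℤ) 1 : ℝ) = ((a + 2*b : ℤ) : ℝ) := by
    push_cast; simp
  rw [this, Int.floor_intCast]
  funext i
  fin_cases i <;> (simp; try ring)

lemma iter2 (k : ℕ) :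
    (srsMap 2 ![(1:ℝ), 2])^[k] ![1, 0] = ![(-1)^k * (1 - (k:ℤ)), (-1)^k * (k:ℤ)] := by
  induction k with
  | zero => norm_num
  | succ n ih =>
      rw [Function.iterate_succ_apply', ih, step2]
      funext i
      fin_cases i <;> (simp; push_cast; ring)


/-- for `r = (x, -x-1)` with `0 < x ≤ 1`, or `r = (1,2)`, one has
`r ∉ D_2`: some orbit of `τ_r` is not ultimately periodic. -/
theorem boundary_D2_divergent (r : Fin 2 → ℝ)
    (hcase : (∃ x : ℝ, 0 < x ∧ x ≤ 1 ∧ r = ![x, -x - 1]) ∨ r = ![1, 2]) :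
    ∃ z : Fin 2 → ℤ, ∀ k l : ℕ, 1 ≤ l → (srsMap 2 r)^[k + l] z ≠ (srsMap 2 r)^[k] z := by
  rcases hcase with ⟨x, hx0, hx1, hr⟩ | hr
  · subst hr
    refine ⟨![0, 1], fun k l hl h => ?_⟩
    rw [iter1 x hx0 hx1, iter1 x hx0 hx1] at h
    have := congrFun h 0
    simp at this
    omega
  · subst hr
    refine ⟨![1, 0], fun k l hl h => ?_⟩
    rw [iter2, iter2] at h
    have h1 := congrFun h 1
    simp at h1
    have h2 := congrArg Int.natAbs h1
    simp [Int.natAbs_mul, Int.natAbs_pow] at h2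
    omega
end

section
/- Let β > 1 be a Pisot number, i.e., a real algebraic integer greater than 1 all of whose complex conjugates other than β itself have modulus strictly less than 1. Then for every x ∈ ℚ(β) ∩ [0,1) the orbit of x under the beta-transformation T_β is ultimately periodic: there exist k ∈ ℕ and l ≥ 1 with T_β^{k+l}(x) = T_β^k(x). -/
/-!
Write `K = ℚ(β)` and `y_n = T_β^n x`. Then `y_{n+1} = β y_n - a_n` with integer digits
`|a_n| ≤ |β| + 1`, and after clearing a denominator `q` of `x` all the `q y_n` are algebraic
integers of `K`. Under a complex embedding `σ` of `K` other than the inclusion the recursion becomes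
`σ(q y_{n+1}) = σ(β) σ(q y_n) - q a_n` with `|σ β| < 1`, so `σ(q y_n)` stays bounded, while
`|q y_n| ≤ |q|` under the inclusion. Algebraic integers of `K` with all conjugates bounded form a
finite set, so `y_a = y_b` for some `a < b`.
-/

open Polynomial IntermediateField NumberField

section LinearOrderedField

variable {R : Type*} [Field R] [LinearOrder R] [IsStrictOrderedRing R]

lemma le_max_of_le_mul_add {A D : R} (hA₀ : 0 ≤ A) (hA₁ : A < 1) {u : ℕ → R}
    (hu : ∀ n, u (n + 1) ≤ A * u n + D) (n : ℕ) : u n ≤ max (u 0) (D / (1 - A)) := by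
  induction n with
  | zero => exact le_max_left _ _
  | succ n ih =>
    have hD : D ≤ (1 - A) * max (u 0) (D / (1 - A)) := by
      rw [← div_le_iff₀' (by linarith)]
      exact le_max_right _ _
    nlinarith [hu n, mul_le_mul_of_nonneg_left ih hA₀]

lemma abs_floor_le_abs_add_one [FloorRing R] (s : R) : |(⌊s⌋ : R)| ≤ |s| + 1 := by
  have := Int.floor_le s
  have := Int.sub_one_lt_floor s
  rw [abs_le]; constructor <;> cases abs_cases s <;> linarith

end LinearOrderedField

lemma betaT_iterate_mem_Ico (β : ℝ) {x : ℝ} (hx : x ∈ Set.Ico 0 1) (n : ℕ) :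
    (betaT β)^[n] x ∈ Set.Ico 0 1 := by
  cases n with
  | zero => exact hx
  | succ n =>
    rw [Function.iterate_succ_apply']
    exact ⟨Int.fract_nonneg _, Int.fract_lt_one _⟩

theorem NumberField.exists_lt_eq_of_isIntegral_of_forall_norm_le {K : Type*} [Field K]
    [NumberField K] {z : ℕ → K} (hz : ∀ n, IsIntegral ℤ (z n))
    (hbdd : ∀ φ : K →+* ℂ, ∃ B, ∀ n, ‖φ (z n)‖ ≤ B) : ∃ a b, a < b ∧ z a = z b := by
  choose B hB using hbdd
  obtain ⟨M, hM⟩ := (Set.finite_range B).bddAbove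
  exact (Embeddings.finite_of_norm_le K ℂ M).exists_lt_map_eq_of_forall_mem
    (t := {x | IsIntegral ℤ x ∧ ∀ φ : K →+* ℂ, ‖φ x‖ ≤ M})
    fun n ↦ ⟨hz n, fun φ ↦ (hB φ n).trans (hM ⟨φ, rfl⟩)⟩

section BetaOrbit

variable {K : Type*} [Field K] (ι : K →+* ℝ) (β : K)

/-- The `T_{ι β}`-orbit of `ι x`, computed in `K`. -/
noncomputable def betaOrbit (x : K) : ℕ → K
  | 0 => x
  | n + 1 => β * betaOrbit x n - ⌊ι (β * betaOrbit x n)⌋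

variable {ι β}

lemma betaOrbit_succ (x : K) (n : ℕ) :
    betaOrbit ι β x (n + 1) = β * betaOrbit ι β x n - ⌊ι β * ι (betaOrbit ι β x n)⌋ := by
  rw [betaOrbit, map_mul]

lemma map_betaOrbit (x : K) (n : ℕ) :
    ι (betaOrbit ι β x n) = (betaT (ι β))^[n] (ι x) := by
  induction n with
  | zero => rfl
  | succ n ih =>
    rw [betaOrbit_succ, Function.iterate_succ_apply', ← ih, betaT, Int.fract]
    simp

lemma isIntegral_zsmul_betaOrbit (hβ : IsIntegral ℤ β) {q : ℤ} {x : K}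
    (hx : IsIntegral ℤ (q • x)) (n : ℕ) : IsIntegral ℤ (q • betaOrbit ι β x n) := by
  induction n with
  | zero => exact hx
  | succ n ih =>
    rw [betaOrbit_succ, smul_sub, ← mul_smul_comm]
    refine (hβ.mul ih).sub ?_
    simpa using isIntegral_algebraMap (R := ℤ) (A := K) (x := q * ⌊ι β * ι (betaOrbit ι β x n)⌋)

lemma abs_map_betaOrbit_le_one {x : K} (hx : ι x ∈ Set.Ico 0 1) (n : ℕ) :
    |ι (betaOrbit ι β x n)| ≤ 1 := by
  obtain ⟨h₀, h₁⟩ := map_betaOrbit (ι := ι) (β := β) x n ▸ betaT_iterate_mem_Ico (ι β) hx n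
  exact abs_le.mpr ⟨by linarith, h₁.le⟩

lemma abs_floor_betaOrbit_le {x : K} (hx : ι x ∈ Set.Ico 0 1) (n : ℕ) :
    |(⌊ι β * ι (betaOrbit ι β x n)⌋ : ℝ)| ≤ |ι β| + 1 :=
  calc |(⌊ι β * ι (betaOrbit ι β x n)⌋ : ℝ)| ≤ |ι β * ι (betaOrbit ι β x n)| + 1 :=
        abs_floor_le_abs_add_one _
    _ ≤ |ι β| + 1 := by
        rw [abs_mul]
        gcongr
        exact mul_le_of_le_one_right (abs_nonneg _) (abs_map_betaOrbit_le_one hx n)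

lemma norm_ofReal_comp_zsmul_betaOrbit_le {x : K} (hx : ι x ∈ Set.Ico 0 1) (q : ℤ) (n : ℕ) :
    ‖(Complex.ofRealHom.comp ι) (q • betaOrbit ι β x n)‖ ≤ |(q : ℝ)| := by
  rw [RingHom.comp_apply, Complex.ofRealHom_eq_coe, Complex.norm_real, map_zsmul,
    Real.norm_eq_abs, zsmul_eq_mul, abs_mul]
  exact mul_le_of_le_one_right (by positivity) (abs_map_betaOrbit_le_one hx n)

lemma exists_norm_map_zsmul_betaOrbit_le {φ : K →+* ℂ} (hφ : ‖φ β‖ < 1) {x : K}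
    (hx : ι x ∈ Set.Ico 0 1) (q : ℤ) : ∃ B, ∀ n, ‖φ (q • betaOrbit ι β x n)‖ ≤ B := by
  refine ⟨_, le_max_of_le_mul_add (norm_nonneg _) hφ (D := |(q : ℝ)| * (|ι β| + 1)) fun n ↦ ?_⟩
  rw [betaOrbit_succ, smul_sub, ← mul_smul_comm, map_sub, map_mul]
  calc ‖φ β * φ (q • betaOrbit ι β x n) - φ (q • (⌊ι β * ι (betaOrbit ι β x n)⌋ : K))‖
      ≤ ‖φ β * φ (q • betaOrbit ι β x n)‖ + ‖φ (q • (⌊ι β * ι (betaOrbit ι β x n)⌋ : K))‖ :=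
        norm_sub_le _ _
    _ ≤ ‖φ β‖ * ‖φ (q • betaOrbit ι β x n)‖ + |(q : ℝ)| * (|ι β| + 1) := by
        rw [norm_mul]
        gcongr
        simpa [← Complex.ofReal_intCast, Complex.norm_real] using
          mul_le_mul_of_nonneg_left (abs_floor_betaOrbit_le hx n) (abs_nonneg (q : ℝ))

theorem betaT_iterate_eventually_periodic [NumberField K] (hβ : IsIntegral ℤ β)
    (hconj : ∀ φ : K →+* ℂ, φ ≠ Complex.ofRealHom.comp ι → ‖φ β‖ < 1) {x : K}
    (hx : ι x ∈ Set.Ico 0 1) :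
    ∃ k l, 1 ≤ l ∧ (betaT (ι β))^[k + l] (ι x) = (betaT (ι β))^[k] (ι x) := by
  obtain ⟨q, hq, hqx⟩ :=
    ((IsFractionRing.isAlgebraic_iff ℤ ℚ K).mpr (.of_finite ℚ x)).exists_integral_multiple
  have hbdd (φ : K →+* ℂ) : ∃ B, ∀ n, ‖φ (q • betaOrbit ι β x n)‖ ≤ B := by
    by_cases hφ : φ = Complex.ofRealHom.comp ι
    · exact ⟨|(q : ℝ)|, hφ ▸ norm_ofReal_comp_zsmul_betaOrbit_le hx q⟩
    · exact exists_norm_map_zsmul_betaOrbit_le (hconj φ hφ) hx q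
  obtain ⟨a, b, hab, heq⟩ :=
    exists_lt_eq_of_isIntegral_of_forall_norm_le (isIntegral_zsmul_betaOrbit hβ hqx) hbdd
  refine ⟨a, b - a, by omega, ?_⟩
  rw [Nat.add_sub_cancel' hab.le, ← map_betaOrbit, ← map_betaOrbit,
    smul_right_injective K hq heq]

end BetaOrbit

section AdjoinSimple

variable {E : Type*} [Field E] [CharZero E] {α : E}

theorem numberField_adjoin_simple (hα : IsIntegral ℚ α) : NumberField ℚ⟮α⟯ where
  to_finiteDimensional := adjoin.finiteDimensional hα

theorem ringHom_ext_adjoin_simple {L : Type*} [Ring L] [Algebra ℚ L] {φ ψ : ℚ⟮α⟯ →+* L}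
    (h : φ (AdjoinSimple.gen ℚ α) = ψ (AdjoinSimple.gen ℚ α)) : φ = ψ := by
  refine RingHom.ext (AlgHom.congr_fun (adjoin_algHom_ext ℚ
    (φ₁ := φ.toRatAlgHom) (φ₂ := ψ.toRatAlgHom) ?_))
  rintro x rfl
  exact h

theorem aeval_ringHom_gen_minpoly {L : Type*} [CommRing L] (φ : ℚ⟮α⟯ →+* L) :
    aeval (φ (AdjoinSimple.gen ℚ α)) (minpoly ℤ α) = 0 := by
  have hgen : aeval (AdjoinSimple.gen ℚ α) (minpoly ℤ α) = 0 :=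
    (algebraMap ℚ⟮α⟯ E).injective <| by
      rw [← aeval_algebraMap_apply, map_zero]
      exact minpoly.aeval ℤ α
  rw [← φ.toIntAlgHom_apply, aeval_algHom_apply, hgen, map_zero]

end AdjoinSimple

theorem pisot_orbit_ultimately_periodic_general (β : ℝ)
    (hint : IsIntegral ℤ β)
    (hpisot : ∀ μ : ℂ, ((minpoly ℤ β).map (Int.castRingHom ℂ)).IsRoot μ →
      μ ≠ (β : ℂ) → ‖μ‖ < 1) :
    ∀ x : ℝ, x ∈ Subfield.closure ({β} : Set ℝ) → x ∈ Set.Ico (0 : ℝ) 1 →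
      ∃ k l : ℕ, 1 ≤ l ∧ (betaT β)^[k + l] x = (betaT β)^[k] x := by
  intro x hxβ hx
  have := numberField_adjoin_simple hint.tower_top
  have hxK : x ∈ ℚ⟮β⟯ :=
    Subfield.closure_le.mpr (Set.singleton_subset_iff.mpr (mem_adjoin_simple_self ℚ β)) hxβ
  have hgen : IsIntegral ℤ (AdjoinSimple.gen ℚ β) :=
    (isIntegral_algHom_iff (algebraMap ℚ⟮β⟯ ℝ).toIntAlgHom (algebraMap ℚ⟮β⟯ ℝ).injective).mp hint
  have hconj (φ : ℚ⟮β⟯ →+* ℂ) (hφ : φ ≠ Complex.ofRealHom.comp (algebraMap ℚ⟮β⟯ ℝ)) :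
      ‖φ (AdjoinSimple.gen ℚ β)‖ < 1 := by
    refine hpisot _ ?_ fun h ↦ hφ (ringHom_ext_adjoin_simple h)
    rw [IsRoot, ← algebraMap_int_eq, eval_map_algebraMap, aeval_ringHom_gen_minpoly]
  exact betaT_iterate_eventually_periodic hgen hconj (x := ⟨x, hxK⟩) hx

/-- if `β` is a Pisot number then the `T_β`-orbit of every
`x ∈ ℚ(β) ∩ [0,1)` is ultimately periodic. -/
theorem pisot_orbit_ultimately_periodic (β : ℝ) (hβ : 1 < β)
    (hint : IsIntegral ℤ β)
    (hpisot : ∀ μ : ℂ, ((minpoly ℤ β).map (Int.castRingHom ℂ)).IsRoot μ →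
      μ ≠ (β : ℂ) → ‖μ‖ < 1) :
    ∀ x : ℝ, x ∈ Subfield.closure ({β} : Set ℝ) → x ∈ Set.Ico (0 : ℝ) 1 →
      ∃ k l : ℕ, 1 ≤ l ∧ (betaT β)^[k + l] x = (betaT β)^[k] x :=
  pisot_orbit_ultimately_periodic_general β hint hpisot
end

section
/- Let β > 1 be a real number and suppose that for every rational x ∈ [0,1) the orbit of x under the beta-transformation T_β is ultimately periodic (there exist k ∈ ℕ and l ≥ 1 with T_β^{k+l}(x) = T_β^k(x)). Then β is an algebraic integer and every complex root of the minimal polynomial of β other than β itself has modulus at most 1; that is, β is either a Pisot number or a Salem number. -/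
open Polynomial Filter Topology Set

theorem Function.exists_lt_iterate_eq_of_iterate_add_eq {α : Type*} {f : α → α} {x : α}
    {k l : ℕ} (hl : 0 < l) (h : f^[k + l] x = f^[k] x) (n : ℕ) :
    ∃ m < k + l, f^[n] x = f^[m] x := by
  rcases lt_or_ge n (k + l) with hn | hn
  · exact ⟨n, hn, rfl⟩
  have hper : IsPeriodicPt f l (f^[k] x) := by
    rw [IsPeriodicPt, IsFixedPt, ← iterate_add_apply, add_comm, h]
  refine ⟨k + (n - k) % l, by have := Nat.mod_lt (n - k) hl; omega, ?_⟩
  rw [add_comm k, iterate_add_apply, hper.iterate_mod_apply, ← iterate_add_apply,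
    Nat.sub_add_cancel (by omega)]

noncomputable def betaDigit (β x : ℝ) : ℤ := ⌊β * x⌋

section BetaExpansion

variable {β : ℝ}

theorem betaT_eq_sub_betaDigit (β x : ℝ) : betaT β x = β * x - betaDigit β x := rfl

theorem mapsTo_betaT (β : ℝ) : MapsTo (betaT β) (Ico 0 1) (Ico 0 1) :=
  fun _ _ => ⟨Int.fract_nonneg _, Int.fract_lt_one _⟩

theorem betaDigit_nonneg_and_le (hβ : 0 ≤ β) {x : ℝ} (hx : x ∈ Ico 0 1) :
    0 ≤ betaDigit β x ∧ (betaDigit β x : ℝ) ≤ β := by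
  refine ⟨Int.floor_nonneg.2 (mul_nonneg hβ hx.1), (Int.floor_le _).trans ?_⟩
  nlinarith [hx.2]

theorem betaT_of_mul_lt_one {x : ℝ} (h₀ : 0 ≤ β * x) (h₁ : β * x < 1) : betaT β x = β * x :=
  Int.fract_eq_self.2 ⟨h₀, h₁⟩

theorem betaDigit_of_mul_lt_one {x : ℝ} (h₀ : 0 ≤ β * x) (h₁ : β * x < 1) : betaDigit β x = 0 :=
  Int.floor_eq_zero_iff.2 ⟨h₀, h₁⟩

theorem iterate_betaT_of_pow_mul_lt_one (hβ : 1 ≤ β) {t : ℝ} (ht : 0 ≤ t) {M : ℕ}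
    (hM : β ^ M * t < 1) {j : ℕ} (hj : j ≤ M) : (betaT β)^[j] t = β ^ j * t := by
  induction j with
  | zero => simp
  | succ j ih =>
    have hlt : β * (β ^ j * t) < 1 := by
      rw [← mul_assoc, ← pow_succ']
      exact (mul_le_mul_of_nonneg_right (pow_le_pow_right₀ hβ hj) ht).trans_lt hM
    rw [Function.iterate_succ_apply', ih (by omega), pow_succ', mul_assoc]
    exact betaT_of_mul_lt_one (by positivity) hlt

theorem betaDigit_iterate_of_pow_mul_lt_one (hβ : 1 ≤ β) {t : ℝ} (ht : 0 ≤ t) {M : ℕ}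
    (hM : β ^ M * t < 1) {j : ℕ} (hj : j < M) : betaDigit β ((betaT β)^[j] t) = 0 := by
  rw [iterate_betaT_of_pow_mul_lt_one hβ ht hM hj.le]
  refine betaDigit_of_mul_lt_one (by positivity) ?_
  rw [← mul_assoc, ← pow_succ']
  exact (mul_le_mul_of_nonneg_right (pow_le_pow_right₀ hβ hj) ht).trans_lt hM

end BetaExpansion

theorem isIntegral_of_finite_orbit {β x : ℝ} (hfin : (range fun n => (betaT β)^[n] x).Finite)
    (hone : (1 : ℝ) ∈ Submodule.span ℤ (range fun n => (betaT β)^[n] x)) : IsIntegral ℤ β := by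
  set N := Submodule.span ℤ (range fun n => (betaT β)^[n] x)
  refine isIntegral_of_smul_mem_submodule N (N.ne_bot_iff.2 ⟨1, hone, one_ne_zero⟩)
    (Submodule.fg_span hfin) β fun y hy => ?_
  induction hy using Submodule.span_induction with
  | mem _ hy =>
    obtain ⟨n, rfl⟩ := hy
    have hstep : β • (betaT β)^[n] x
        = (betaT β)^[n + 1] x + betaDigit β ((betaT β)^[n] x) • (1 : ℝ) := by
      rw [Function.iterate_succ_apply', betaT_eq_sub_betaDigit, zsmul_one, smul_eq_mul]
      ring
    rw [hstep]
    exact N.add_mem (Submodule.subset_span ⟨n + 1, rfl⟩) (N.smul_mem _ hone)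
  | zero => simp
  | add y z _ _ hy hz => exact smul_add β y z ▸ N.add_mem hy hz
  | smul a y _ hy => exact smul_comm β a y ▸ N.smul_mem a hy

theorem isIntegral_of_iterate_add_eq {β x : ℝ} {m : ℤ} (hx : m * x = 1) {k l : ℕ} (hl : 0 < l)
    (h : (betaT β)^[k + l] x = (betaT β)^[k] x) : IsIntegral ℤ β := by
  refine isIntegral_of_finite_orbit (x := x)
    (((finite_Iio (k + l)).image fun n => (betaT β)^[n] x).subset ?_) ?_
  · rintro _ ⟨n, rfl⟩
    obtain ⟨j, hj, he⟩ := Function.exists_lt_iterate_eq_of_iterate_add_eq hl h n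
    exact ⟨j, hj, he.symm⟩
  · convert Submodule.smul_mem _ m (Submodule.subset_span (mem_range_self 0))
    rw [zsmul_eq_mul, Function.iterate_zero_apply, hx]

theorem norm_le_div_of_recurrence {𝕜 : Type*} [NormedDivisionRing 𝕜] {μ : 𝕜} (hμ : 1 < ‖μ‖)
    {ζ d : ℕ → 𝕜} {b : ℝ} (hd : ∀ n, ‖d n‖ ≤ b) (hrec : ∀ n, ζ (n + 1) = μ * ζ n - d n)
    (hbdd : BddAbove (range fun n => ‖ζ n‖)) (n : ℕ) : ‖ζ n‖ ≤ b / (‖μ‖ - 1) := by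
  set c := b / (‖μ‖ - 1)
  by_contra! hn
  -- the excess of `‖ζ m‖` over the fixed point `c` of `r ↦ ‖μ‖ r - b` grows geometrically
  have hstep : ∀ m, ‖μ‖ * (‖ζ m‖ - c) ≤ ‖ζ (m + 1)‖ - c := by
    intro m
    have hc : ‖μ‖ * c - c = b := by
      rw [← sub_one_mul]
      exact mul_div_cancel₀ b (sub_pos.2 hμ).ne'
    have := norm_sub_norm_le (μ * ζ m) (d m)
    rw [norm_mul, ← hrec] at this
    linarith [hd m]
  have hgeom : ∀ j, ‖μ‖ ^ j * (‖ζ n‖ - c) ≤ ‖ζ (n + j)‖ - c := by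
    intro j
    induction j with
    | zero => simp
    | succ j ih =>
      rw [pow_succ', mul_assoc, ← add_assoc]
      exact (mul_le_mul_of_nonneg_left ih (by linarith)).trans (hstep _)
  obtain ⟨B, hB⟩ := hbdd
  obtain ⟨j, hj⟩ := pow_unbounded_of_one_lt ((B - c) / (‖ζ n‖ - c)) hμ
  rw [div_lt_iff₀ (sub_pos.2 hn)] at hj
  linarith [hgeom j, hB ⟨n + j, rfl⟩]

theorem aeval_eq_of_aeval_minpoly_eq_zero {K A B : Type*} [Field K] [Ring A] [Algebra K A]
    [CommRing B] [Algebra K B] {β : A} {μ : B} (hμ : aeval μ (minpoly K β) = 0) {P Q : K[X]}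
    (h : aeval β P = aeval β Q) : aeval μ P = aeval μ Q := by
  rw [← sub_eq_zero, ← map_sub] at h ⊢
  exact aeval_eq_zero_of_dvd_aeval_eq_zero (minpoly.dvd K β h) hμ

noncomputable def orbitPoly (β : ℝ) (x : ℚ) : ℕ → ℚ[X]
  | 0 => C x
  | n + 1 => X * orbitPoly β x n - C (betaDigit β ((betaT β)^[n] x) : ℚ)

section OrbitPoly

variable {β : ℝ} {x : ℚ} {A : Type*} [CommRing A] [Algebra ℚ A]

theorem aeval_orbitPoly_succ (α : A) (n : ℕ) :
    aeval α (orbitPoly β x (n + 1))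
      = α * aeval α (orbitPoly β x n) - betaDigit β ((betaT β)^[n] x) := by
  simp [orbitPoly]

theorem aeval_orbitPoly_self (n : ℕ) : aeval β (orbitPoly β x n) = (betaT β)^[n] x := by
  induction n with
  | zero => simp [orbitPoly]
  | succ n ih =>
    rw [aeval_orbitPoly_succ, ih, Function.iterate_succ_apply', betaT_eq_sub_betaDigit]

theorem aeval_orbitPoly_add_of_betaDigit_eq_zero (α : A) {n j : ℕ}
    (hd : ∀ i < j, betaDigit β ((betaT β)^[n + i] x) = 0) :
    aeval α (orbitPoly β x (n + j)) = α ^ j * aeval α (orbitPoly β x n) := by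
  induction j with
  | zero => simp
  | succ j ih =>
    rw [← add_assoc, aeval_orbitPoly_succ, hd j (by omega), ih fun i hi => hd i (by omega)]
    simp [pow_succ', mul_assoc]

theorem aeval_orbitPoly_of_mem_Ioo (hβ : 1 < β) {M : ℕ}
    (hx : (x : ℝ) ∈ Ioo β⁻¹ (β⁻¹ + β⁻¹ ^ (M + 1))) (α : A) :
    aeval α (orbitPoly β x (M + 1)) = α ^ M * (α * algebraMap ℚ A x - 1) := by
  have hβ0 : 0 < β := by linarith
  have ht : 0 < β * x - 1 := sub_pos.2 ((inv_lt_iff_one_lt_mul₀' hβ0).1 hx.1)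
  have htM : β ^ M * (β * x - 1) < 1 := by
    calc β ^ M * (β * x - 1) = β ^ (M + 1) * (x - β⁻¹) := by field_simp; ring
      _ < β ^ (M + 1) * β⁻¹ ^ (M + 1) := by gcongr; linarith [hx.2]
      _ = 1 := by rw [← mul_pow, mul_inv_cancel₀ hβ0.ne', one_pow]
  have hdigit : betaDigit β x = 1 := by
    have : β ^ M * (β * x - 1) ≥ β * x - 1 := le_mul_of_one_le_left ht.le (one_le_pow₀ hβ.le)
    refine Int.floor_eq_iff.2 ⟨?_, ?_⟩ <;> push_cast <;> linarith
  have hT : betaT β x = β * x - 1 := by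
    rw [betaT_eq_sub_betaDigit, hdigit, Int.cast_one]
  rw [add_comm, aeval_orbitPoly_add_of_betaDigit_eq_zero α fun i hi => ?_, aeval_orbitPoly_succ]
  · simp [orbitPoly, hdigit]
  · rw [add_comm, Function.iterate_add_apply, Function.iterate_one, hT]
    exact betaDigit_iterate_of_pow_mul_lt_one hβ.le ht.le htM hi

end OrbitPoly

theorem norm_aeval_orbitPoly_le {β : ℝ} (hβ : 0 ≤ β) {μ : ℂ} (hμ : aeval μ (minpoly ℚ β) = 0)
    (hμ1 : 1 < ‖μ‖) {x : ℚ} (hx : (x : ℝ) ∈ Ico 0 1) {k l : ℕ} (hl : 0 < l)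
    (hkl : (betaT β)^[k + l] x = (betaT β)^[k] x) (n : ℕ) :
    ‖aeval μ (orbitPoly β x n)‖ ≤ β / (‖μ‖ - 1) := by
  refine norm_le_div_of_recurrence (ζ := fun n => aeval μ (orbitPoly β x n)) hμ1 (fun n => ?_)
    (aeval_orbitPoly_succ μ) ?_ n
  · obtain ⟨h0, hle⟩ := betaDigit_nonneg_and_le hβ ((mapsTo_betaT β).iterate n hx)
    rwa [Complex.norm_intCast, abs_of_nonneg (Int.cast_nonneg h0)]
  · refine (((finite_Iio (k + l)).image fun m => ‖aeval μ (orbitPoly β x m)‖).subset ?_).bddAbove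
    rintro _ ⟨n, rfl⟩
    obtain ⟨m, hm, he⟩ := Function.exists_lt_iterate_eq_of_iterate_add_eq hl hkl n
    have horbit : aeval β (orbitPoly β x m) = aeval β (orbitPoly β x n) := by
      rw [aeval_orbitPoly_self, aeval_orbitPoly_self, he]
    exact ⟨m, hm, congrArg norm (aeval_eq_of_aeval_minpoly_eq_zero hμ horbit)⟩

theorem norm_le_one_of_aeval_minpoly_eq_zero {β : ℝ} (hβ : 1 < β)
    (hper : ∀ q : ℚ, (q : ℝ) ∈ Ico 0 1 →
      ∃ k l : ℕ, 0 < l ∧ (betaT β)^[k + l] q = (betaT β)^[k] q)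
    {μ : ℂ} (hμ : aeval μ (minpoly ℚ β) = 0) (hne : μ ≠ β) : ‖μ‖ ≤ 1 := by
  by_contra! hμ1
  have hβ0 : 0 < β := by linarith
  have hbound (x : ℚ) (hx : (x : ℝ) ∈ Ico 0 1) (n : ℕ) :
      ‖aeval μ (orbitPoly β x n)‖ ≤ β / (‖μ‖ - 1) := by
    obtain ⟨k, l, hl, hkl⟩ := hper x hx
    exact norm_aeval_orbitPoly_le hβ0.le hμ hμ1 hx hl hkl n
  choose x hx using fun M : ℕ =>
    exists_rat_btwn (lt_add_of_pos_right β⁻¹ (by positivity : 0 < β⁻¹ ^ (M + 1)))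
  have hlim : Tendsto (fun M => (x M : ℝ)) atTop (𝓝 β⁻¹) := by
    refine tendsto_of_tendsto_of_tendsto_of_le_of_le tendsto_const_nhds ?_
      (fun M => (hx M).1.le) (fun M => (hx M).2.le)
    simpa using tendsto_const_nhds.add ((tendsto_pow_atTop_nhds_zero_of_lt_one (by positivity)
      (inv_lt_one_of_one_lt₀ hβ)).comp (tendsto_add_atTop_nat 1))
  have hgrow : Tendsto (fun M => ‖μ‖ ^ M * ‖μ * (x M : ℝ) - 1‖) atTop atTop := by
    have hcont : Continuous fun y : ℝ => ‖μ * y - 1‖ :=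
      ((continuous_const.mul Complex.continuous_ofReal).sub continuous_const).norm
    refine (tendsto_pow_atTop_atTop_of_one_lt hμ1).atTop_mul_pos ?_ ((hcont.tendsto _).comp hlim)
    rw [norm_pos_iff, sub_ne_zero, Complex.ofReal_inv, Ne,
      mul_inv_eq_one₀ (by exact_mod_cast hβ0.ne')]
    exact hne
  have hmem : ∀ᶠ M in atTop, (x M : ℝ) ∈ Ico 0 1 :=
    hlim.eventually (Ioo_mem_nhds (by positivity) (inv_lt_one_of_one_lt₀ hβ)) |>.mono
      fun _ h => Ioo_subset_Ico_self h
  obtain ⟨M, hM, hbig⟩ := (hmem.and (hgrow.eventually_gt_atTop (β / (‖μ‖ - 1)))).exists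
  have := hbound (x M) hM (M + 1)
  rw [aeval_orbitPoly_of_mem_Ioo hβ (hx M), norm_mul, norm_pow, eq_ratCast] at this
  rw [Complex.ofReal_ratCast] at hbig
  linarith

/-- if the `T_β`-orbit of every rational in `[0,1)` is ultimately
periodic, then `β` is an algebraic integer all of whose conjugates other than `β`
itself have modulus at most `1` (i.e., `β` is a Pisot or a Salem number). -/
theorem periodic_rationals_pisot_or_salem (β : ℝ) (hβ : 1 < β)
    (hper : ∀ q : ℚ, (q : ℝ) ∈ Set.Ico (0 : ℝ) 1 →
      ∃ k l : ℕ, 1 ≤ l ∧ (betaT β)^[k + l] (q : ℝ) = (betaT β)^[k] (q : ℝ)) :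
    IsIntegral ℤ β
    ∧ ∀ μ : ℂ, ((minpoly ℤ β).map (Int.castRingHom ℂ)).IsRoot μ →
        μ ≠ (β : ℂ) → ‖μ‖ ≤ 1 := by
  have hint : IsIntegral ℤ β := by
    obtain ⟨k, l, hl, hkl⟩ := hper (1 / 2) (by norm_num)
    exact isIntegral_of_iterate_add_eq (m := 2) (by norm_num) hl hkl
  refine ⟨hint, fun μ hroot hne => norm_le_one_of_aeval_minpoly_eq_zero hβ hper ?_ hne⟩
  rwa [minpoly.isIntegrallyClosed_eq_field_fractions' ℚ hint, aeval_map_algebraMap, aeval_def,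
    ← eval_map]
end

section
/- Let d ≥ 1, r ∈ ℝ^d, and let V ⊆ ℤ^d be a set of witnesses for r, i.e., V contains ±e_1,…,±e_d (the standard basis vectors and their negatives) and for every z ∈ V both τ_r(z) ∈ V and −τ_r(−z) ∈ V. Then r ∈ D_d^{(0)} (for every z ∈ ℤ^d there exists k ∈ ℕ with τ_r^k(z) = 0) if and only if for every z ∈ V there exists k ∈ ℕ with τ_r^k(z) = 0. -/
lemma floor_add_cases (A B : ℝ) :
    ⌊A + B⌋ = ⌊A⌋ + ⌊B⌋ ∨ (⌊A + B⌋ = ⌊A⌋ + ⌊B⌋ + 1 ∧ ⌊-A⌋ = -⌊A⌋ - 1) := by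
  have h1 : ⌊A⌋ + ⌊B⌋ ≤ ⌊A + B⌋ := by
    rw [Int.le_floor]; push_cast
    linarith [Int.floor_le A, Int.floor_le B]
  have h2 : ⌊A + B⌋ < ⌊A⌋ + ⌊B⌋ + 2 := by
    rw [Int.floor_lt]; push_cast
    linarith [Int.lt_floor_add_one A, Int.lt_floor_add_one B]
  rcases eq_or_lt_of_le h1 with h | h
  · exact Or.inl h.symm
  · right
    refine ⟨by omega, ?_⟩
    have hA : (⌊A⌋ : ℝ) < A := by
      rcases lt_or_eq_of_le (Int.floor_le A) with h' | h'
      · exact h'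
      · exfalso
        have h3 := Int.floor_intCast_add ⌊A⌋ B
        rw [h'] at h3
        omega
    have hlt : ⌊-A⌋ < -⌊A⌋ := by rw [Int.floor_lt]; push_cast; linarith
    have hge : -⌊A⌋ - 1 ≤ ⌊-A⌋ := by
      rw [Int.le_floor]; push_cast; linarith [Int.lt_floor_add_one A]
    omega

lemma srs_add (d : ℕ) (r : Fin d → ℝ) (x y : Fin d → ℤ) :
    srsMap d r (x + y) = srsMap d r x + srsMap d r y ∨
    srsMap d r (x + y) = -(srsMap d r (-x)) + srsMap d r y := by
  set A := ∑ j, r j * (x j : ℝ) with hA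
  set B := ∑ j, r j * (y j : ℝ) with hB
  have hAB : (∑ j, r j * ((x j + y j : ℤ) : ℝ)) = A + B := by
    rw [hA, hB, ← Finset.sum_add_distrib]
    apply Finset.sum_congr rfl
    intro j _
    push_cast [Pi.add_apply]
    ring
  have hnA : (∑ j, r j * ((-(x j) : ℤ) : ℝ)) = -A := by
    rw [hA, ← Finset.sum_neg_distrib]
    apply Finset.sum_congr rfl
    intro j _
    push_cast [Pi.neg_apply]
    ring
  rcases floor_add_cases A B with hc | hc
  · left
    funext i
    simp only [srsMap, Pi.add_apply]
    split_ifs with h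
    · rfl
    · rw [hAB, hc]; ring
  · right
    funext i
    simp only [srsMap, Pi.add_apply, Pi.neg_apply]
    split_ifs with h
    · simp
    · rw [hAB, hnA, hc.1, hc.2]; ring

/-- if `V` is a set of witnesses for `r` (it contains `±e_1,…,±e_d` and
is closed under `z ↦ τ_r(z)` and `z ↦ -τ_r(-z)`), then `r ∈ D_d^{(0)}` if and only if
every element of `V` is eventually mapped to `0` by `τ_r`. -/
theorem witnesses_characterize_finiteness (d : ℕ) (hd : 1 ≤ d) (r : Fin d → ℝ)
    (V : Set (Fin d → ℤ))
    (hbasis : ∀ i : Fin d, (Pi.single i 1 : Fin d → ℤ) ∈ V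
      ∧ -(Pi.single i 1 : Fin d → ℤ) ∈ V)
    (hclosed : ∀ z ∈ V, srsMap d r z ∈ V ∧ -(srsMap d r (-z)) ∈ V) :
    (∀ z : Fin d → ℤ, ∃ k : ℕ, (srsMap d r)^[k] z = 0)
      ↔ (∀ z ∈ V, ∃ k : ℕ, (srsMap d r)^[k] z = 0) := by
  constructor
  · intro h z _
    exact h z
  · intro hV z
    have hadd : ∀ x ∈ V, ∀ y : Fin d → ℤ, (∃ k, (srsMap d r)^[k] y = 0) →
        ∃ k, (srsMap d r)^[k] (x + y) = 0 := by
      rintro x hx y ⟨K, hK⟩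
      have key : ∀ k, ∃ w ∈ V, (srsMap d r)^[k] (x + y) = w + (srsMap d r)^[k] y := by
        intro k
        induction k with
        | zero => exact ⟨x, hx, rfl⟩
        | succ k ih =>
          obtain ⟨w, hw, hwk⟩ := ih
          rw [Function.iterate_succ_apply', hwk, Function.iterate_succ_apply']
          rcases srs_add d r w ((srsMap d r)^[k] y) with h' | h'
          · exact ⟨srsMap d r w, (hclosed w hw).1, h'⟩
          · exact ⟨-(srsMap d r (-w)), (hclosed w hw).2, h'⟩
      obtain ⟨w, hw, hwk⟩ := key K
      obtain ⟨k', hk'⟩ := hV w hw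
      refine ⟨k' + K, ?_⟩
      rw [Function.iterate_add_apply, hwk, hK, add_zero]
      exact hk'
    have main : ∀ n : ℕ, ∀ z : Fin d → ℤ, (∑ i, (z i).natAbs) ≤ n →
        ∃ k, (srsMap d r)^[k] z = 0 := by
      intro n
      induction n with
      | zero =>
        intro z hz
        have hz0 : z = 0 := by
          funext i
          have h0 : (z i).natAbs = 0 :=
            Finset.sum_eq_zero_iff.mp (Nat.le_zero.mp hz) i (Finset.mem_univ i)
          simp only [Pi.zero_apply]
          omega
        exact ⟨0, by simp [hz0]⟩
      | succ n ih =>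
        intro z hz
        by_cases h0 : z = 0
        · exact ⟨0, by simp [h0]⟩
        · obtain ⟨i, hi⟩ : ∃ i, z i ≠ 0 := by
            by_contra hc
            push_neg at hc
            exact h0 (funext fun i => hc i)
          set s : ℤ := if 0 < z i then 1 else -1 with hs
          set z' : Fin d → ℤ := z - Pi.single i s with hz'
          have hzeq : z = Pi.single i s + z' := by rw [hz']; abel
          have hmem : Pi.single i s ∈ V := by
            rw [hs]
            split_ifs
            · exact (hbasis i).1
            · have hneg : (Pi.single i (-1 : ℤ) : Fin d → ℤ) = -(Pi.single i 1) := by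
                funext j
                by_cases hj : j = i <;> simp [Pi.single_apply, hj]
              rw [hneg]
              exact (hbasis i).2
          have h1 : ∀ j, j ≠ i → (z' j).natAbs = (z j).natAbs := by
            intro j hj
            simp [hz', Pi.single_apply, hj]
          have h2 : (z' i).natAbs + 1 = (z i).natAbs := by
            have hzi : z' i = z i - s := by simp [hz']
            rw [hzi, hs]
            split_ifs with h <;> omega
          have hdec : (∑ j, (z' j).natAbs) + 1 ≤ ∑ j, (z j).natAbs := by
            rw [← Finset.add_sum_erase _ (fun j => (z' j).natAbs) (Finset.mem_univ i),
              ← Finset.add_sum_erase _ (fun j => (z j).natAbs) (Finset.mem_univ i)]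
            have he : ∑ j ∈ Finset.univ.erase i, (z' j).natAbs
                = ∑ j ∈ Finset.univ.erase i, (z j).natAbs :=
              Finset.sum_congr rfl (fun j hj => h1 j (Finset.ne_of_mem_erase hj))
            omega
          have hsum : (∑ j, (z' j).natAbs) ≤ n := by omega
          obtain ⟨k, hk⟩ := ih z' hsum
          rw [hzeq]
          exact hadd _ hmem z' ⟨k, hk⟩
    exact main (∑ i, (z i).natAbs) z le_rfl
end

section
/- Let d, q ≥ 1, r = (r_0,…,r_{d-1}) ∈ ℝ^d and s = (s_0,…,s_{q-1}) ∈ ℤ^q, and let t = (t_0,…,t_{d+q-1}) = r ⊙ s be defined by the polynomial identity X^{d+q} + t_{d+q-1}X^{d+q-1} + ⋯ + t_0 = (X^d + r_{d-1}X^{d-1} + ⋯ + r_0)(X^q + s_{q-1}X^{q-1} + ⋯ + s_0). For an integer sequence (x_n)_{n∈ℕ} satisfying 0 ≤ Σ_{j=0}^{d+q-1} t_j x_{n+j} + x_{n+d+q} < 1 for all n ∈ ℕ (i.e., (x_n) is an orbit sequence of τ_t), the sequence y_n := Σ_{k=0}^{q-1} s_k x_{n+k} + x_{n+q} is an integer sequence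 satisfying 0 ≤ Σ_{j=0}^{d-1} r_j y_{n+j} + y_{n+d} < 1 for all n ∈ ℕ (i.e., (y_n) is an orbit sequence of τ_r). Conversely, every integer sequence (y_n) satisfying 0 ≤ Σ_{j=0}^{d-1} r_j y_{n+j} + y_{n+d} < 1 for all n arises in this way from some orbit sequence (x_n) of τ_t. In other words, V_s ∘ τ*_{r⊙s}(ℤ^{d+q}) = τ*_r(ℤ^d). -/
open Polynomial

/-- `(x_n)` is an orbit sequence of the shift radix system `τ_r`, i.e.
`0 ≤ r_0 x_n + ⋯ + r_{d-1} x_{n+d-1} + x_{n+d} < 1` for all `n`. -/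
def IsSrsSeq (d : ℕ) (r : Fin d → ℝ) (x : ℕ → ℤ) : Prop :=
  ∀ n : ℕ,
    0 ≤ (∑ j : Fin d, r j * (x (n + (j : ℕ)) : ℝ)) + (x (n + d) : ℝ)
    ∧ (∑ j : Fin d, r j * (x (n + (j : ℕ)) : ℝ)) + (x (n + d) : ℝ) < 1

/-- The map `V_s` on integer sequences:
`(x_n) ↦ (s_0 x_n + ⋯ + s_{q-1} x_{n+q-1} + x_{n+q})`. -/
def vMap (q : ℕ) (s : Fin q → ℤ) (x : ℕ → ℤ) : ℕ → ℤ :=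
  fun n => (∑ k : Fin q, s k * x (n + (k : ℕ))) + x (n + q)

noncomputable def Sh : (ℕ → ℝ) →ₗ[ℝ] (ℕ → ℝ) where
  toFun f := fun n => f (n + 1)
  map_add' := by intros; rfl
  map_smul' := by intros; rfl

lemma sh_pow (e : ℕ) (f : ℕ → ℝ) (n : ℕ) : (Sh ^ e) f n = f (n + e) := by
  induction e generalizing f n with
  | zero => rfl
  | succ m ih =>
    have : (Sh ^ (m + 1)) f = (Sh ^ m) (Sh f) := by
      rw [pow_succ]; rfl
    rw [this, ih]
    show f (n + m + 1) = f (n + (m + 1))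
    congr 1

lemma aeval_form (e : ℕ) (c : Fin e → ℝ) (f : ℕ → ℝ) (n : ℕ) :
    (aeval Sh (X ^ e + ∑ j : Fin e, C (c j) * X ^ (j : ℕ))) f n
      = (∑ j : Fin e, c j * f (n + (j : ℕ))) + f (n + e) := by
  rw [map_add, map_sum, map_pow, aeval_X]
  simp only [LinearMap.add_apply, map_mul, aeval_C, map_pow, aeval_X]
  rw [LinearMap.sum_apply]
  simp only [Module.End.mul_apply]
  rw [show ((Sh ^ e) f + ∑ x : Fin e, ((algebraMap ℝ (Module.End ℝ (ℕ → ℝ))) (c x)) ((Sh ^ (x : ℕ)) f)) n = (Sh ^ e) f n + ∑ x : Fin e, ((algebraMap ℝ (Module.End ℝ (ℕ → ℝ))) (c x)) ((Sh ^ (x : ℕ)) f) n from by rw [Pi.add_apply, Finset.sum_apply]]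
  have : ∀ j : Fin e, ((algebraMap ℝ (Module.End ℝ (ℕ → ℝ))) (c j)) ((Sh ^ (j : ℕ)) f) n
      = c j * f (n + (j : ℕ)) := by
    intro j
    rw [Module.algebraMap_end_apply]
    simp [sh_pow]
  simp only [this, sh_pow]
  ring

def buildX (q : ℕ) (s : Fin q → ℤ) (y : ℕ → ℤ) : ℕ → ℤ
  | n =>
    if h : n < q then 0
    else y (n - q) - ∑ k : Fin q, s k * buildX q s y (n - q + (k : ℕ))
  termination_by n => n
  decreasing_by
    have := k.isLt
    omega

lemma vMap_buildX (q : ℕ) (s : Fin q → ℤ) (y : ℕ → ℤ) :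
    vMap q s (buildX q s y) = y := by
  funext n
  unfold vMap
  rw [show buildX q s y (n + q) =
      y (n + q - q) - ∑ k : Fin q, s k * buildX q s y (n + q - q + (k : ℕ)) from by
    rw [buildX]; simp]
  simp only [Nat.add_sub_cancel]
  ring

theorem odot_orbit_correspondence (d q : ℕ) (hd : 1 ≤ d) (hq : 1 ≤ q)
    (r : Fin d → ℝ) (s : Fin q → ℤ) (t : Fin (d + q) → ℝ)
    (ht : (X ^ (d + q) + ∑ j : Fin (d + q), C (t j) * X ^ (j : ℕ))
      = (X ^ d + ∑ j : Fin d, C (r j) * X ^ (j : ℕ))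
        * (X ^ q + ∑ j : Fin q, C ((s j : ℝ)) * X ^ (j : ℕ))) :
    (∀ x : ℕ → ℤ, IsSrsSeq (d + q) t x → IsSrsSeq d r (vMap q s x))
    ∧ (∀ y : ℕ → ℤ, IsSrsSeq d r y →
        ∃ x : ℕ → ℤ, IsSrsSeq (d + q) t x ∧ vMap q s x = y) := by
  have key : ∀ (x : ℕ → ℤ) (n : ℕ),
      (∑ j : Fin (d + q), t j * (x (n + (j : ℕ)) : ℝ)) + (x (n + (d + q)) : ℝ)
        = (∑ j : Fin d, r j * (vMap q s x (n + (j : ℕ)) : ℝ))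
          + (vMap q s x (n + d) : ℝ) := by
    intro x n
    set f : ℕ → ℝ := fun m => (x m : ℝ) with hf
    have h1 := congrArg (fun p => (aeval Sh p) f n) ht
    rw [aeval_form] at h1
    rw [map_mul] at h1
    have hQ : (aeval Sh (X ^ q + ∑ j : Fin q, C ((s j : ℝ)) * X ^ (j : ℕ))) f
        = fun m => (vMap q s x m : ℝ) := by
      funext m
      rw [aeval_form]
      simp [vMap, hf]
    rw [Module.End.mul_apply, hQ, aeval_form] at h1
    exact h1
  constructor
  · intro x hx n
    rw [← key x n]
    exact hx n
  · intro y hy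
    refine ⟨buildX q s y, ?_, vMap_buildX q s y⟩
    intro n
    rw [key (buildX q s y) n, vMap_buildX q s y]
    exact hy n
end
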